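/- arXiv:math/0402348 — 11 statements merged into one kernel-verified Lean document; each statement's English description precedes it below -/
import Mathlib

section
/- For all natural numbers n ≥ 1, n! · P^n(1) = ∑_{k=1}^n s(n,k) · λ^{n-k} · P(1)^k, where s(n,k) denotes the (signed) Stirling numbers of the first kind, defined as the coefficients in t(t-1)⋯(t-n+1) = ∑_{k=0}^n s(n,k) t^k, and P^n denotes the n-fold iterate of P. -/
/-- Signed Stirling numbers of the first kind: the coefficients of the
descending factorial `t(t-1)⋯(t-n+1) = ∑_{k=0}^n s(n,k) t^k`. -/
noncomputable def stirling1 (n k : ℕ) : ℤ := (descPochhammer ℤ n).coeff k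

open Polynomial in
/-- Homogenized expansion of the descending factorial:
`∏_{k<m} (u - k·A) = ∑_{k≤m} s(m,k) A^{m-k} u^k`. -/
lemma baxter_homog_descPochhammer {R : Type*} [CommRing R] (u A : R) : ∀ m : ℕ,
    ∏ k ∈ Finset.range m, (u - (k:R) * A) =
      ∑ k ∈ Finset.range (m+1), (descPochhammer ℤ m).coeff k • (A^(m-k) * u^k) := by
  intro m
  induction m with
  | zero => simp [descPochhammer]
  | succ n ih =>
    set p := descPochhammer ℤ n with hp
    have hc : ∀ k, (descPochhammer ℤ (n+1)).coeff k = (p*X).coeff k - (n:ℤ) * p.coeff k := by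
      intro k
      rw [descPochhammer_succ_right, mul_sub, coeff_sub, ← C_eq_natCast, coeff_mul_C]
      ring
    have htop : p.coeff (n+1) = 0 :=
      coeff_eq_zero_of_natDegree_lt (by simp [hp])
    rw [Finset.prod_range_succ, ih]
    have h1 : ∑ k ∈ Finset.range (n+2), (descPochhammer ℤ (n+1)).coeff k • (A^(n+1-k) * u^k)
        = (∑ k ∈ Finset.range (n+2), (p*X).coeff k • (A^(n+1-k) * u^k))
          - ∑ k ∈ Finset.range (n+2), ((n:ℤ) * p.coeff k) • (A^(n+1-k) * u^k) := by
      rw [← Finset.sum_sub_distrib]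
      exact Finset.sum_congr rfl fun k _ => by rw [hc k, sub_smul]
    have h2 : ∑ k ∈ Finset.range (n+2), (p*X).coeff k • (A^(n+1-k) * u^k)
        = (∑ k ∈ Finset.range (n+1), p.coeff k • (A^(n-k) * u^k)) * u := by
      rw [Finset.sum_range_succ', Finset.sum_mul]
      simp only [coeff_mul_X, Polynomial.mul_coeff_zero, coeff_X_zero, mul_zero, zero_smul, add_zero,
        Nat.succ_sub_succ]
      exact Finset.sum_congr rfl fun k _ => by
        rw [pow_succ, smul_mul_assoc, mul_assoc]
    have h3 : ∑ k ∈ Finset.range (n+2), ((n:ℤ) * p.coeff k) • (A^(n+1-k) * u^k)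
        = (∑ k ∈ Finset.range (n+1), p.coeff k • (A^(n-k) * u^k)) * ((n:R) * A) := by
      rw [Finset.sum_range_succ, htop, mul_zero, zero_smul, add_zero, Finset.sum_mul]
      refine Finset.sum_congr rfl fun k hk => ?_
      have hkn : k ≤ n := Nat.lt_succ_iff.mp (Finset.mem_range.mp hk)
      rw [show n+1-k = (n-k)+1 from by omega, pow_succ, mul_smul, natCast_zsmul,
        nsmul_eq_mul, mul_smul_comm, smul_mul_assoc]
      congr 1
      ring
    rw [h1, h2, h3]
    ring

/-- In a Baxter `C`-algebra `(R, P)` of weight `λ`, for all `n ≥ 1`,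
`n! P^n(1) = ∑_{k=1}^n s(n,k) λ^{n-k} P(1)^k`. -/
theorem baxter_stirling_first_kind {C R : Type*} [CommRing C] [CommRing R] [Algebra C R]
    (lam : C) (P : R →ₗ[C] R)
    (hP : ∀ x y : R, P x * P y = P (x * P y) + P (P x * y) + algebraMap C R lam * P (x * y))
    (n : ℕ) (hn : 1 ≤ n) :
    (n.factorial : ℤ) • (⇑P)^[n] 1 = ∑ k ∈ Finset.Icc 1 n,
      stirling1 n k • ((algebraMap C R lam) ^ (n - k) * (P 1) ^ k) := by
  set A := algebraMap C R lam with hA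
  have hPA : ∀ x, P (A * x) = A * P x := fun x => by
    rw [hA, ← Algebra.smul_def, map_smul, Algebra.smul_def]
  have hPn : ∀ (m : ℕ) (x : R), P ((m:R) * x) = (m:R) * P x := fun m x => by
    rw [← nsmul_eq_mul, map_nsmul, nsmul_eq_mul]
  have key1 : ∀ m : ℕ, P 1 * (⇑P)^[m] 1 =
      (m:R) * (⇑P)^[m+1] 1 + (⇑P)^[m+1] 1 + (m:R) * (A * (⇑P)^[m] 1) := by
    intro m
    induction m with
    | zero => simp
    | succ m ih =>
      have hB := hP 1 ((⇑P)^[m] 1)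
      simp only [one_mul] at hB
      simp only [Function.iterate_succ_apply'] at ih ⊢
      have hPin := congrArg P ih
      simp only [map_add, hPn, hPA] at hPin
      push_cast
      linear_combination hB + hPin
  have key2 : ∀ m : ℕ, (m.factorial : R) * (⇑P)^[m] 1 =
      ∏ k ∈ Finset.range m, (P 1 - (k:R) * A) := by
    intro m
    induction m with
    | zero => simp
    | succ m ih =>
      rw [Finset.prod_range_succ, ← ih, Nat.factorial_succ]
      push_cast
      have := key1 m
      simp only [Function.iterate_succ_apply'] at this ⊢
      linear_combination (-(m.factorial : R)) * this
  have hmain : (n.factorial : R) * (⇑P)^[n] 1 =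
      ∑ k ∈ Finset.range (n+1), (descPochhammer ℤ n).coeff k • (A^(n-k) * (P 1)^k) := by
    rw [key2 n, baxter_homog_descPochhammer (P 1) A n]
  have hset : Finset.range (n+1) = insert 0 (Finset.Icc 1 n) := by
    ext k
    simp only [Finset.mem_range, Finset.mem_insert, Finset.mem_Icc]
    omega
  have hzero : (descPochhammer ℤ n).coeff 0 = 0 := by
    rw [Polynomial.coeff_zero_eq_eval_zero]
    exact descPochhammer_ne_zero_eval_zero ℤ (Nat.one_le_iff_ne_zero.mp hn)
  rw [hset, Finset.sum_insert (by simp), hzero, zero_smul, zero_add] at hmain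
  rw [zsmul_eq_mul, Int.cast_natCast, hmain]
  exact Finset.sum_congr rfl fun k _ => by rw [stirling1]
end

section
/- In any Baxter C-algebra (R,P) of weight λ, for every natural number k ≥ 1 one has P^k(1) · P(1) = (k+1) P^{k+1}(1) + k λ P^k(1), where P^k denotes the k-fold iterate of P. -/
/-- In a Baxter `C`-algebra `(R, P)` of weight `λ`, for every `k ≥ 1`,
`P^k(1) · P(1) = (k+1) P^{k+1}(1) + k λ P^k(1)`. -/
theorem baxter_iterate_mul {C R : Type*} [CommRing C] [CommRing R] [Algebra C R]
    (lam : C) (P : R →ₗ[C] R)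
    (hP : ∀ x y : R, P x * P y = P (x * P y) + P (P x * y) + algebraMap C R lam * P (x * y))
    (k : ℕ) (hk : 1 ≤ k) :
    (⇑P)^[k] 1 * P 1 = (k + 1 : ℕ) • (⇑P)^[k + 1] 1 +
      k • (algebraMap C R lam * (⇑P)^[k] 1) := by
  have hsmul : ∀ x : R, P (algebraMap C R lam * x) = algebraMap C R lam * P x := by
    intro x
    rw [← Algebra.smul_def, map_smul, Algebra.smul_def]
  induction k with
  | zero => omega
  | succ n ih =>
    rcases Nat.eq_zero_or_pos n with hn | hn
    · subst hn
      simp only [Function.iterate_succ', Function.iterate_zero, Function.comp_apply, id_eq]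
      have := hP 1 1
      simp only [one_mul, mul_one] at this
      rw [this]
      simp only [nsmul_eq_mul]
      push_cast
      ring
    · have ih' := ih hn
      have key : (⇑P)^[n+1] 1 * P 1
          = P ((⇑P)^[n] 1 * P 1) + (⇑P)^[n+2] 1
            + algebraMap C R lam * (⇑P)^[n+1] 1 := by
        have h1 : (⇑P)^[n+1] 1 = P ((⇑P)^[n] 1) := by
          rw [Function.iterate_succ', Function.comp_apply]
        have h2 : (⇑P)^[n+2] 1 = P ((⇑P)^[n+1] 1) := by
          rw [Function.iterate_succ', Function.comp_apply]
        rw [h1, hP ((⇑P)^[n] 1) 1, mul_one, mul_one, ← h1, h2, h1]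
      rw [key, ih', map_add, map_nsmul, map_nsmul, hsmul,
        ← Function.iterate_succ_apply' P (n+1), ← Function.iterate_succ_apply' P n]
      have h2 : (⇑P)^[n+1+1] 1 = (⇑P)^[n+2] 1 := rfl
      rw [h2]
      simp only [nsmul_eq_mul]
      push_cast
      ring
end

section
/- For every prime p and every Baxter C-algebra (R,P) of weight λ, P(1)^p ≡ λ^{p-1} P(1) modulo p (i.e., P(1)^p - λ^{p-1}P(1) lies in the ideal p·R of R). -/
/-- `bxc n k = k! * S(n,k)`, the number of surjections from an `n`-set onto a `k`-set. -/
def bxc : ℕ → ℕ → ℤ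
  | 0, 0 => 1
  | 0, _+1 => 0
  | _+1, 0 => 0
  | n+1, k+1 => (k+1 : ℤ) * (bxc n k + bxc n (k+1))

lemma negpow (k j : ℕ) (h : j ≤ k) : (-1:ℤ)^(k-j) = (-1)^k * (-1)^j := by
  rw [← pow_add]
  conv_rhs => rw [show k + j = (k - j) + 2*j by omega]
  rw [pow_add, pow_mul]
  norm_num

lemma bxc_formula (n k : ℕ) :
    bxc n k = ∑ j ∈ Finset.range (k+1), (-1:ℤ)^(k-j) * (k.choose j) * (j:ℤ)^n := by
  induction n generalizing k with
  | zero =>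
    match k with
    | 0 => simp [bxc]
    | k+1 =>
      have h : ∀ j ∈ Finset.range (k+2), (-1:ℤ)^(k+1-j) * (((k+1).choose j : ℕ) : ℤ) * (j:ℤ)^0
          = (-1:ℤ)^(k+1) * ((-1)^j * (((k+1).choose j : ℕ) : ℤ)) := by
        intro j hj
        rw [Finset.mem_range] at hj
        rw [negpow (k+1) j (by omega)]
        ring
      rw [Finset.sum_congr rfl h, ← Finset.mul_sum,
        Int.alternating_sum_range_choose_of_ne (Nat.succ_ne_zero k)]
      simp [bxc]
  | succ n ih =>
    match k with
    | 0 => simp [bxc]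
    | k+1 =>
      have hA : (∑ j ∈ Finset.range (k+2), (-1:ℤ)^(k+1-j) * (((k+1).choose j : ℕ):ℤ) * (j:ℤ)^(n+1))
          = (k+1 : ℤ) * ∑ i ∈ Finset.range (k+1), (-1:ℤ)^(k-i) * ((k.choose i : ℕ):ℤ) * ((i:ℤ)+1)^n := by
        rw [Finset.sum_range_succ', Finset.mul_sum]
        have h0 : ((-1:ℤ))^(k+1-0) * (((k+1).choose 0 : ℕ):ℤ) * ((0:ℕ):ℤ)^(n+1) = 0 := by
          simp
        rw [h0, add_zero]
        refine Finset.sum_congr rfl fun i hi => ?_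
        rw [Finset.mem_range] at hi
        have hc : ((k:ℤ)+1) * ((k.choose i : ℕ):ℤ) = (((k+1).choose (i+1) : ℕ):ℤ) * ((i:ℤ)+1) := by
          exact_mod_cast congrArg (Nat.cast : ℕ → ℤ) (Nat.add_one_mul_choose_eq k i)
        rw [Nat.succ_sub_succ]
        push_cast
        linear_combination (-(-1:ℤ)^(k-i) * ((i:ℤ)+1)^n) * hc
      have hsplit : (∑ j ∈ Finset.range (k+2), (-1:ℤ)^(k+1-j) * (((k+1).choose j : ℕ):ℤ) * (j:ℤ)^n)
          = -(∑ j ∈ Finset.range (k+1), (-1:ℤ)^(k-j) * ((k.choose j : ℕ):ℤ) * (j:ℤ)^n)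
            + ∑ i ∈ Finset.range (k+1), (-1:ℤ)^(k-i) * ((k.choose i : ℕ):ℤ) * ((i:ℤ)+1)^n := by
        rw [Finset.sum_range_succ' (fun j => (-1:ℤ)^(k+1-j) * (((k+1).choose j : ℕ):ℤ) * (j:ℤ)^n),
          Finset.sum_range_succ' (fun j => (-1:ℤ)^(k-j) * ((k.choose j : ℕ):ℤ) * (j:ℤ)^n)]
        have hpas : ∀ i ∈ Finset.range (k+1),
            (-1:ℤ)^(k+1-(i+1)) * (((k+1).choose (i+1) : ℕ):ℤ) * (((i+1:ℕ)):ℤ)^n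
            = (-1:ℤ)^(k-i) * ((k.choose i : ℕ):ℤ) * ((i:ℤ)+1)^n
              + (-1:ℤ)^(k-i) * ((k.choose (i+1) : ℕ):ℤ) * ((i:ℤ)+1)^n := by
          intro i hi
          rw [Nat.succ_sub_succ, Nat.choose_succ_succ]
          push_cast
          ring
        rw [Finset.sum_congr rfl hpas, Finset.sum_add_distrib]
        rw [Finset.sum_range_succ (fun i => (-1:ℤ)^(k-i) * ((k.choose (i+1) : ℕ):ℤ) * ((i:ℤ)+1)^n)]
        rw [Nat.choose_succ_self]
        have hlast : ∀ i ∈ Finset.range k,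
            (-1:ℤ)^(k-i) * ((k.choose (i+1) : ℕ):ℤ) * ((i:ℤ)+1)^n
            = -((-1:ℤ)^(k-(i+1)) * ((k.choose (i+1) : ℕ):ℤ) * (((i+1:ℕ)):ℤ)^n) := by
          intro i hi
          rw [Finset.mem_range] at hi
          rw [show k - i = (k - (i+1)) + 1 by omega, pow_succ]
          push_cast
          ring
        rw [Finset.sum_congr rfl hlast, Finset.sum_neg_distrib]
        simp only [Nat.choose_zero_right, Nat.cast_one, Nat.sub_zero]
        ring
      have hrec : bxc (n+1) (k+1) = (k+1 : ℤ) * (bxc n k + bxc n (k+1)) := rfl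
      rw [hrec, ih k, ih (k+1), hA]
      have : (∑ j ∈ Finset.range (k+1), (-1:ℤ)^(k-j) * ((k.choose j : ℕ):ℤ) * (j:ℤ)^n)
          + (∑ j ∈ Finset.range (k+2), (-1:ℤ)^(k+1-j) * (((k+1).choose j : ℕ):ℤ) * (j:ℤ)^n)
          = ∑ i ∈ Finset.range (k+1), (-1:ℤ)^(k-i) * ((k.choose i : ℕ):ℤ) * ((i:ℤ)+1)^n := by
        rw [hsplit]; ring
      rw [← this]

lemma bxc_eq_zero_of_lt : ∀ n k : ℕ, n < k → bxc n k = 0 := by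
  intro n
  induction n with
  | zero => intro k hk; match k, hk with | k+1, _ => rfl
  | succ n ih =>
    intro k hk
    match k, hk with
    | k+1, hk =>
      show (k+1 : ℤ) * (bxc n k + bxc n (k+1)) = 0
      rw [ih k (by omega), ih (k+1) (by omega)]
      ring

lemma bxc_succ_one : ∀ n : ℕ, bxc (n+1) 1 = 1 := by
  intro n
  induction n with
  | zero => rfl
  | succ n ih =>
    show (0+1 : ℤ) * (bxc (n+1) 0 + bxc (n+1) 1) = 1
    rw [ih]; rfl

lemma bxc_dvd (p : ℕ) (hp : p.Prime) (k : ℕ) (hk : 2 ≤ k) : (p:ℤ) ∣ bxc p k := by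
  haveI : Fact p.Prime := ⟨hp⟩
  have h0 : ((bxc p k : ℤ) : ZMod p) = 0 := by
    rw [bxc_formula]
    push_cast
    have h : ∀ j ∈ Finset.range (k+1), (-1:ZMod p)^(k-j) * ((k.choose j : ℕ) : ZMod p) * ((j:ℕ):ZMod p)^p
        = (-1:ZMod p)^(k-j) * ((k.choose j : ℕ) : ZMod p) * ((j:ℕ):ZMod p)^1 := by
      intro j _
      rw [ZMod.pow_card, pow_one]
    rw [Finset.sum_congr rfl h]
    have h1 : ((bxc 1 k : ℤ) : ZMod p)
        = ∑ j ∈ Finset.range (k+1), (-1:ZMod p)^(k-j) * ((k.choose j : ℕ):ZMod p) * ((j:ℕ):ZMod p)^1 := by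
      rw [bxc_formula]; push_cast
      exact Finset.sum_congr rfl (fun j _ => by rw [pow_one])
    rw [← h1]
    obtain ⟨m, rfl⟩ : ∃ m, k = m + 2 := ⟨k - 2, by omega⟩
    show (((m+2 : ℤ) * (bxc 0 (m+1) + bxc 0 (m+2)) : ℤ) : ZMod p) = 0
    have : bxc 0 (m+1) = 0 := rfl
    have h2 : bxc 0 (m+2) = 0 := rfl
    rw [this, h2]
    simp
  exact_mod_cast (ZMod.intCast_zmod_eq_zero_iff_dvd _ _).mp h0

/-- In a Baxter `C`-algebra `(R, P)` of weight `λ` and a prime `p`,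
`P(1)^p ≡ λ^{p-1} P(1) (mod p)`. -/
theorem baxter_fermat_one {C R : Type*} [CommRing C] [CommRing R] [Algebra C R]
    (lam : C) (P : R →ₗ[C] R)
    (hP : ∀ x y : R, P x * P y = P (x * P y) + P (P x * y) + algebraMap C R lam * P (x * y))
    (p : ℕ) (hp : p.Prime) :
    (P 1) ^ p - (algebraMap C R lam) ^ (p - 1) * P 1 ∈ Ideal.span {(p : R)} := by
  set L : R := algebraMap C R lam with hLdef
  set d : ℕ → R := fun k => (⇑P)^[k] 1 with hddef
  have hd0 : d 0 = 1 := rfl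
  have hds : ∀ k, d (k+1) = P (d k) := fun k => Function.iterate_succ_apply' _ _ _
  have hlam : ∀ x : R, P (L * x) = L * P x := fun x => by
    rw [hLdef, ← Algebra.smul_def, map_smul, Algebra.smul_def]
  have hnat : ∀ (n : ℕ) (x : R), P ((n:R) * x) = (n:R) * P x := fun n x => by
    rw [← nsmul_eq_mul, map_nsmul, nsmul_eq_mul]
  -- Step lemma: e · d k = (k+1) d(k+1) + k λ d k
  have hA : ∀ k : ℕ, P 1 * d k = ((k+1 : ℕ) : R) * d (k+1) + ((k : ℕ) : R) * (L * d k) := by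
    intro k
    induction k with
    | zero => simp [hd0, hds 0]
    | succ k ih =>
      have e1 : P 1 * d (k+1) = P (d (k+1)) + P (P 1 * d k) + L * d (k+1) := by
        rw [hds k]
        have h := hP 1 (d k)
        rw [one_mul, one_mul] at h
        exact h
      rw [e1, ih, map_add, hnat, hnat, hlam, ← hds (k+1), ← hds k]
      push_cast
      ring
  -- Expansion: e^n = Σ_k bxc n k · λ^{n-k} · d k
  have hB : ∀ n : ℕ, P 1 ^ n = ∑ k ∈ Finset.range (n+1), ((bxc n k : ℤ) : R) * L^(n-k) * d k := by
    intro n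
    induction n with
    | zero => simp [hd0]; norm_num [bxc]
    | succ n ih =>
      rw [pow_succ, mul_comm, ih, Finset.mul_sum]
      have hterm : ∀ k ∈ Finset.range (n+1), P 1 * (((bxc n k : ℤ):R) * L^(n-k) * d k)
          = ((bxc n k : ℤ):R) * ((k+1 : ℕ):R) * L^(n-k) * d (k+1)
            + ((bxc n k : ℤ):R) * ((k : ℕ):R) * L^(n+1-k) * d k := by
        intro k hk
        rw [Finset.mem_range] at hk
        have h2 : P 1 * (((bxc n k : ℤ):R) * L^(n-k) * d k)
            = ((bxc n k : ℤ):R) * L^(n-k) * (P 1 * d k) := by ring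
        rw [h2, hA k, show n + 1 - k = (n - k) + 1 by omega, pow_succ]
        ring
      rw [Finset.sum_congr rfl hterm, Finset.sum_add_distrib]
      have hT : ∑ k ∈ Finset.range (n+2), ((bxc (n+1) k : ℤ):R) * L^(n+1-k) * d k
          = (∑ k ∈ Finset.range (n+1), ((bxc n k : ℤ):R) * ((k+1 : ℕ):R) * L^(n-k) * d (k+1))
            + ∑ i ∈ Finset.range (n+1), ((bxc n (i+1) : ℤ):R) * ((i+1 : ℕ):R) * L^(n-i) * d (i+1) := by
        rw [Finset.sum_range_succ']
        have h0 : ((bxc (n+1) 0 : ℤ):R) * L^(n+1-0) * d 0 = 0 := by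
          norm_num [show bxc (n+1) 0 = 0 from rfl]
        rw [h0, add_zero, ← Finset.sum_add_distrib]
        refine Finset.sum_congr rfl fun i hi => ?_
        have hrec : bxc (n+1) (i+1) = (i+1 : ℤ) * (bxc n i + bxc n (i+1)) := rfl
        rw [Nat.succ_sub_succ, hrec]
        push_cast
        ring
      rw [hT]
      congr 1
      -- Σ_k bxc n k · k · λ^{n+1-k} d k = Σ_i bxc n (i+1) · (i+1) · λ^{n-i} d(i+1)
      rw [Finset.sum_range_succ' (fun k => ((bxc n k : ℤ):R) * ((k : ℕ):R) * L^(n+1-k) * d k),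
        Finset.sum_range_succ (fun i => ((bxc n (i+1) : ℤ):R) * ((i+1 : ℕ):R) * L^(n-i) * d (i+1))]
      rw [bxc_eq_zero_of_lt n (n+1) (by omega)]
      simp [Nat.succ_sub_succ]
  -- Final assembly
  rw [Ideal.mem_span_singleton, hB p]
  have hp2 := hp.two_le
  obtain ⟨q, rfl⟩ : ∃ q, p = q + 2 := ⟨p - 2, by omega⟩
  rw [Finset.sum_range_succ' (fun k => ((bxc (q+2) k : ℤ):R) * L^(q+2-k) * d k)]
  rw [Finset.sum_range_succ' (fun i => ((bxc (q+2) (i+1) : ℤ):R) * L^(q+2-(i+1)) * d (i+1))]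
  have h0 : ((bxc (q+2) 0 : ℤ):R) * L^(q+2-0) * d 0 = 0 := by
    norm_num [show bxc (q+2) 0 = 0 from rfl]
  have h1 : ((bxc (q+2) (0+1) : ℤ):R) * L^(q+2-(0+1)) * d (0+1) = L^(q+1) * P 1 := by
    rw [show bxc (q+2) (0+1) = 1 from bxc_succ_one (q+1), show d (0+1) = P 1 from by rw [hds 0, hd0]]
    norm_num
  rw [h0, h1, add_zero, show q + 2 - 1 = q + 1 from rfl]
  have hsub : (∑ i ∈ Finset.range (q+1), ((bxc (q+2) (i+1+1) : ℤ):R) * L^(q+2-(i+1+1)) * d (i+1+1))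
      + L^(q+1) * P 1 - L^(q+1) * P 1
      = ∑ i ∈ Finset.range (q+1), ((bxc (q+2) (i+2) : ℤ):R) * L^(q-i) * d (i+2) := by
    simp [show ∀ i:ℕ, q+2-(i+1+1) = q - i from fun i => by omega]
  rw [hsub]
  refine Finset.dvd_sum fun i hi => ?_
  obtain ⟨m, hm⟩ := bxc_dvd (q+2) hp (i+2) (by omega)
  refine ⟨(m : R) * L^(q-i) * d (i+2), ?_⟩
  rw [hm]
  push_cast
  ring
end

section
/- For every prime p and every Baxter C-algebra (R,P) of weight λ, and every element a ∈ R, one has P(a)^p ≡ λ^{p-1} P(a^p) modulo the ideal p·R. -/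
/-!
Writing `u = P(a)` and `v = P(a) + λa`, the Baxter identity gives by induction on `n`
`P(a)^(n+1) = P(a · ∑_{i ≤ n} u^i v^(n-i))`: the argument of `P` at step `n + 1` is
`x·P(a) + P(x)·a + λ·x·a` for the argument `x` at step `n`. For `n + 1 = p` the geometric sum is
`((u + λa)^p - u^p) / (λa)`, which is `(λa)^(p-1)` modulo `p`.
-/

open Finset

/-- The division by `w` in `(u + w)^p - u^p = w · ∑ u^i (u + w)^(p-1-i)` is carried out with `w`
replaced by the indeterminate `X`, which is a non-zero-divisor. -/
theorem exists_geom_sum₂_add_eq_pow_add_prime_mul {A : Type*} [CommRing A] {p : ℕ}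
    (hp : p.Prime) (u w : A) :
    ∃ r, ∑ i ∈ range p, u ^ i * (u + w) ^ (p - 1 - i) = w ^ (p - 1) + p * r := by
  open Polynomial in
  obtain ⟨q, hq⟩ := exists_add_pow_prime_eq hp (C u) X
  have hS : ∑ i ∈ range p, C u ^ i * (C u + X) ^ (p - 1 - i) =
      X ^ (p - 1) + (p : A[X]) * (C u * q) := by
    refine isRegular_X.right ?_
    have hgeom := geom_sum₂_mul (C u) (C u + X) p
    have hX : X ^ (p - 1) * X = (X ^ p : A[X]) := pow_sub_one_mul hp.ne_zero X
    dsimp only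
    linear_combination -hgeom + hq - hX
  refine ⟨(C u * q).eval w, ?_⟩
  simpa [Polynomial.eval_finsetSum] using congrArg (Polynomial.eval w) hS

theorem baxter_pow_succ_eq {C R : Type*} [CommRing C] [CommRing R] [Algebra C R] {lam : C}
    {P : R →ₗ[C] R}
    (hP : ∀ x y : R, P x * P y = P (x * P y) + P (P x * y) + algebraMap C R lam * P (x * y))
    (a : R) (n : ℕ) :
    P a ^ (n + 1) =
      P (a * ∑ i ∈ range (n + 1), P a ^ i * (P a + algebraMap C R lam * a) ^ (n - i)) := by
  set L := algebraMap C R lam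
  induction n with
  | zero => simp
  | succ n ih =>
    set G := ∑ i ∈ range (n + 1), P a ^ i * (P a + L * a) ^ (n - i)
    have hG : ∑ i ∈ range (n + 1 + 1), P a ^ i * (P a + L * a) ^ (n + 1 - i) =
        P a ^ (n + 1) + (P a + L * a) * G := geom_sum₂_succ_eq _ _
    calc P a ^ (n + 1 + 1) = P (a * G) * P a := by rw [pow_succ, ih]
      _ = P (a * G * P a) + P (P (a * G) * a) + L * P (a * G * a) := hP _ _
      _ = P (a * G * P a + P (a * G) * a + L * (a * G * a)) := by
        rw [map_add, map_add, LinearMap.map_algebraMap_mul]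
      _ = _ := by rw [hG, ih]; congr 1; ring

/-- In a Baxter `C`-algebra `(R, P)` of weight `λ` and a prime `p`, for every `a ∈ R`,
`P(a)^p ≡ λ^{p-1} P(a^p) (mod p)`. -/
theorem baxter_fermat_elt {C R : Type*} [CommRing C] [CommRing R] [Algebra C R]
    (lam : C) (P : R →ₗ[C] R)
    (hP : ∀ x y : R, P x * P y = P (x * P y) + P (P x * y) + algebraMap C R lam * P (x * y))
    (p : ℕ) (hp : p.Prime) (a : R) :
    (P a) ^ p - (algebraMap C R lam) ^ (p - 1) * P (a ^ p) ∈ Ideal.span {(p : R)} := by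
  obtain ⟨r, hr⟩ := exists_geom_sum₂_add_eq_pow_add_prime_mul hp (P a) (algebraMap C R lam * a)
  have hpow := baxter_pow_succ_eq hP a (p - 1)
  rw [Nat.sub_add_cancel hp.one_le, hr] at hpow
  have hsplit : a * ((algebraMap C R lam * a) ^ (p - 1) + p * r) =
      algebraMap C R (lam ^ (p - 1)) * a ^ p + p • (a * r) := by
    rw [nsmul_eq_mul, map_pow, ← mul_pow_sub_one hp.ne_zero a]
    ring
  rw [hsplit, map_add, LinearMap.map_algebraMap_mul, map_nsmul, map_pow, nsmul_eq_mul] at hpow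
  exact Ideal.mem_span_singleton'.mpr ⟨P (a * r), by rw [hpow]; ring⟩
end

section
/- For every prime p and every Baxter C-algebra (R,P) of weight λ, and every finite sequence a_1, …, a_n of elements of R, (a_1 · P(a_2 · P(a_3 ⋯ P(a_n)⋯)))^p ≡ λ^{(n-1)(p-1)} · a_1^p · P(a_2^p · P(a_3^p ⋯ P(a_n^p)⋯)) modulo the ideal p·R. (This is the image in any Baxter algebra of the tensor identity (a_1⊗⋯⊗a_n)^p ≡ λ^{(n-1)(p-1)} a_1^p⊗⋯⊗a_n^p mod p in the free Baxter algebra.) -/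
/-- `nest P [a₁, …, aₙ] = a₁ · P(a₂ · P(a₃ ⋯ P(aₙ)⋯))`, the image in a Baxter algebra of the
pure tensor `a₁ ⊗ ⋯ ⊗ aₙ` of the free Baxter algebra. -/
def nest {R : Type*} [CommRing R] (P : R → R) : List R → R
  | [] => 1
  | [a] => a
  | a :: b :: l => a * P (nest P (b :: l))

/-!
Rewriting the Baxter identity as `P x * P y = P (θ y + x P y)` with `θ = λ x + P x` gives, by
induction, `P x ^ (n + 1) = P (x ∑_{i ≤ n} (P x) ^ i θ ^ (n - i))`. For `n + 1 = p` this geometric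
sum is `(θ - P x) ^ (p - 1) = (λ x) ^ (p - 1)` modulo `p`: in `𝔽_p[X, Y]` one has
`X ∑ Y ^ i (X + Y) ^ (p - 1 - i) = (X + Y) ^ p - Y ^ p = X ^ p`, and `X` cancels. Hence
`P x ^ p ≡ λ ^ (p - 1) P (x ^ p) (mod p)`; since `P` is additive it preserves `p R`, and induction
along the list picks up one factor `λ ^ (p - 1)` per application of `P`.
-/

open Finset

theorem sum_pow_mul_add_pow_eq_pow_pred {S : Type*} [CommRing S] {p : ℕ} (hp : p.Prime)
    (hpS : (p : S) = 0) (a b : S) :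
    ∑ i ∈ range p, b ^ i * (a + b) ^ (p - 1 - i) = a ^ (p - 1) := by
  have : Fact p.Prime := ⟨hp⟩
  let X : Fin 2 → MvPolynomial (Fin 2) (ZMod p) := MvPolynomial.X
  have key : ∑ i ∈ range p, (X 0 + X 1) ^ i * X 1 ^ (p - 1 - i) = X 0 ^ (p - 1) := by
    apply mul_right_cancel₀ (MvPolynomial.X_ne_zero (R := ZMod p) (0 : Fin 2))
    rw [← pow_succ, Nat.sub_add_cancel hp.one_le]
    simpa [add_pow_char] using geom_sum₂_mul_add (X 0) (X 1) p
  rw [geom_sum₂_comm]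
  simpa [X] using
    congrArg (MvPolynomial.eval₂Hom (ZMod.castHom (ringChar.dvd hpS) S) ![a, b]) key

theorem map_mem_span_natCast {R S F : Type*} [CommSemiring R] [CommSemiring S] [FunLike F R S]
    [AddMonoidHomClass F R S] (f : F) (n : ℕ) {u : R} (hu : u ∈ Ideal.span {(n : R)}) :
    f u ∈ Ideal.span {(n : S)} := by
  obtain ⟨c, rfl⟩ := Ideal.mem_span_singleton'.mp hu
  rw [mul_comm, ← nsmul_eq_mul, map_nsmul, nsmul_eq_mul]
  exact Ideal.mul_mem_right _ _ (Ideal.mem_span_singleton_self _)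

section Baxter

variable {C R : Type*} [CommRing C] [CommRing R] [Algebra C R] {lam : C} {P : R →ₗ[C] R}
  (hP : ∀ x y : R, P x * P y = P (x * P y) + P (P x * y) + algebraMap C R lam * P (x * y))
include hP

theorem baxter_mul_eq (x y : R) :
    P x * P y = P ((algebraMap C R lam * x + P x) * y + x * P y) := by
  rw [hP, ← P.map_algebraMap_mul, ← map_add, ← map_add]
  congr 1
  ring

theorem baxter_pow_succ (x : R) (n : ℕ) :
    P x ^ (n + 1) =
      P (x * ∑ i ∈ range (n + 1), P x ^ i * (algebraMap C R lam * x + P x) ^ (n - i)) := by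
  induction n with
  | zero => simp
  | succ n ih =>
    rw [pow_succ', ih, baxter_mul_eq hP, ← ih, geom_sum₂_succ_eq (P x) _ (n := n + 1),
      Nat.add_sub_cancel]
    congr 1
    ring

variable {p : ℕ} (hp : p.Prime)
include hp

theorem baxter_pow_prime_sub_mem (x : R) :
    P x ^ p - algebraMap C R lam ^ (p - 1) * P (x ^ p) ∈ Ideal.span {(p : R)} := by
  set I := Ideal.span {(p : R)}
  have hpI : (p : R ⧸ I) = 0 := by
    simpa using Ideal.Quotient.eq_zero_iff_mem.mpr (Ideal.mem_span_singleton_self (p : R))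
  have hsum : x * ∑ i ∈ range p, P x ^ i * (algebraMap C R lam * x + P x) ^ (p - 1 - i) -
      algebraMap C R lam ^ (p - 1) * x ^ p ∈ I := by
    rw [← Ideal.Quotient.eq_zero_iff_mem]
    simp only [map_sub, map_mul, map_sum, map_pow, map_add]
    rw [sum_pow_mul_add_pow_eq_pow_pred hp hpI, mul_pow, mul_left_comm, ← pow_succ',
      Nat.sub_add_cancel hp.one_le, sub_self]
  have hP_sum := map_mem_span_natCast P p hsum
  have hpow := baxter_pow_succ hP x (p - 1)
  rw [Nat.sub_add_cancel hp.one_le] at hpow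
  rwa [map_sub, ← map_pow (algebraMap C R) lam, P.map_algebraMap_mul, map_pow, ← hpow] at hP_sum

theorem baxter_mul_pow_prime_sub_mem {a N M : R} {m : ℕ}
    (h : N ^ p - algebraMap C R lam ^ m * M ∈ Ideal.span {(p : R)}) :
    (a * P N) ^ p - algebraMap C R lam ^ (p - 1 + m) * (a ^ p * P M) ∈
      Ideal.span {(p : R)} := by
  have hPN := baxter_pow_prime_sub_mem hP hp N
  have hPh := map_mem_span_natCast P p h
  have split : (a * P N) ^ p - algebraMap C R lam ^ (p - 1 + m) * (a ^ p * P M) =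
      a ^ p * (P N ^ p - algebraMap C R lam ^ (p - 1) * P (N ^ p)) +
        a ^ p * algebraMap C R lam ^ (p - 1) * P (N ^ p - algebraMap C R lam ^ m * M) := by
    rw [map_sub, ← map_pow (algebraMap C R) lam m, P.map_algebraMap_mul, map_pow (algebraMap C R)]
    ring
  rw [split]
  exact add_mem (Ideal.mul_mem_left _ _ hPN) (Ideal.mul_mem_left _ _ hPh)

end Baxter

/-- For a Baxter `C`-algebra `(R, P)` of weight `λ`, a prime `p` and `a₁, …, aₙ ∈ R` (`n ≥ 1`),
`(a₁·P(a₂·P(⋯P(aₙ)⋯)))^p ≡ λ^{(n-1)(p-1)} a₁^p·P(a₂^p·P(⋯P(aₙ^p)⋯)) (mod p)`. -/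
theorem baxter_fermat_tensor {C R : Type*} [CommRing C] [CommRing R] [Algebra C R]
    (lam : C) (P : R →ₗ[C] R)
    (hP : ∀ x y : R, P x * P y = P (x * P y) + P (P x * y) + algebraMap C R lam * P (x * y))
    (p : ℕ) (hp : p.Prime) (l : List R) (hl : l ≠ []) :
    (nest (⇑P) l) ^ p -
        (algebraMap C R lam) ^ ((l.length - 1) * (p - 1)) *
          nest (⇑P) (l.map (fun a => a ^ p)) ∈ Ideal.span {(p : R)} := by
  induction l with
  | nil => exact absurd rfl hl
  | cons a t ih =>
    rcases t with _ | ⟨b, t⟩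
    · simp [nest]
    · have step := baxter_mul_pow_prime_sub_mem hP hp (a := a) (ih (List.cons_ne_nil b t))
      have hexp : (t.length + 1) * (p - 1) = p - 1 + t.length * (p - 1) := by ring
      simpa [nest, hexp] using step
end

section
/- Let p be a prime and (R,P) a Baxter 𝔽_p-algebra of weight λ with λ^{p-1} = 1 (e.g. λ = 1), generated as a Baxter algebra by elements a satisfying a^p = a. Concretely: if a^p = a holds for a, then for all n ≥ 1 the element e_n defined by e_1 = a, e_{n+1} = P(e_n) satisfies e_n^p = e_n. -/
/-- Let `p` be a prime, `(R, P)` a Baxter `𝔽_p`-algebra of weight `λ` with `λ^{p-1} = 1`,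
and `a ∈ R` with `a^p = a`.  If `e 1 = a` and `e (n+1) = P (e n)` for `n ≥ 1`, then
`(e n)^p = e n` for all `n ≥ 1`. -/
theorem baxter_fermat_char_p (p : ℕ) (hp : p.Prime) {R : Type*} [CommRing R]
    [Algebra (ZMod p) R] (lam : ZMod p) (hlam : lam ^ (p - 1) = 1)
    (P : R →ₗ[ZMod p] R)
    (hP : ∀ x y : R, P x * P y = P (x * P y) + P (P x * y) +
      algebraMap (ZMod p) R lam * P (x * y))
    (a : R) (ha : a ^ p = a) (e : ℕ → R) (he1 : e 1 = a)
    (herec : ∀ n, 1 ≤ n → e (n + 1) = P (e n)) :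
    ∀ n, 1 ≤ n → e n ^ p = e n := by
  haveI : Fact p.Prime := ⟨hp⟩
  set u : R := algebraMap (ZMod p) R lam with hu
  have hsm : ∀ y : R, u * y = lam • y := fun y => (Algebra.smul_def lam y).symm
  have hPl : ∀ y : R, P (u * y) = u * P y := by
    intro y; rw [hsm, map_smul, hsm]
  have hlam0 : lam ≠ 0 := by
    intro h
    rw [h, zero_pow (by have := hp.two_le; omega : p - 1 ≠ 0)] at hlam
    exact zero_ne_one hlam
  have key : ∀ x : R, P x ^ p = P (x ^ p) := by
    rcases subsingleton_or_nontrivial R with hs | hnt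
    · intro x; exact Subsingleton.elim _ _
    · haveI : CharP R p :=
        charP_of_injective_ringHom (algebraMap (ZMod p) R).injective p
      intro x
      have main : ∀ n : ℕ, 1 ≤ n → ∃ z : R, P x ^ n = P z ∧
          (P x + u * x) ^ n = P z + u * z := by
        intro n hn
        induction n with
        | zero => omega
        | succ n ih =>
          by_cases h0 : n = 0
          · subst h0
            exact ⟨x, by rw [pow_one], by rw [pow_one]⟩
          · obtain ⟨z, hz1, hz2⟩ := ih (by omega)
            refine ⟨z * P x + P z * x + u * (z * x), ?_, ?_⟩
            · rw [pow_succ, hz1, hP z x, map_add, map_add, hPl]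
            · rw [pow_succ, hz2, map_add, map_add, hPl]
              have := hP z x
              ring_nf
              ring_nf at this
              rw [this]
              ring
      obtain ⟨z, hz1, hz2⟩ := main p hp.one_le
      have hfresh : (P x + u * x) ^ p = P x ^ p + (u * x) ^ p := add_pow_char (P x) (u * x) p
      rw [hz1, hz2] at hfresh
      have hcancel : u * z = u * x ^ p := by
        have h1 : (u * x) ^ p = u * x ^ p := by
          rw [mul_pow, hu, ← map_pow]
          congr 2
          calc lam ^ p = lam ^ (p - 1) * lam := by
                rw [← pow_succ]; congr 1; have := hp.two_le; omega
            _ = lam := by rw [hlam, one_mul]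
        rw [h1] at hfresh
        exact add_left_cancel hfresh
      have hz : z = x ^ p := by
        have h2 : algebraMap (ZMod p) R lam⁻¹ * (u * z)
            = algebraMap (ZMod p) R lam⁻¹ * (u * x ^ p) := by rw [hcancel]
        rwa [← mul_assoc, ← mul_assoc, hu, ← map_mul, inv_mul_cancel₀ hlam0,
          map_one, one_mul, one_mul] at h2
      rw [hz1, hz]
  intro n hn
  induction n with
  | zero => omega
  | succ n ih =>
    by_cases h0 : n = 0
    · subst h0; rw [he1]; exact ha
    · rw [herec n (by omega), key, ih (by omega)]
end

section
/- Define the weight-λ mixable shuffle product on T(A) = ⊕_{n≥1} A^{⊗n} recursively by: a ⋄ (b_0⊗b_1⊗⋯⊗b_n) = (ab_0)⊗b_1⊗⋯⊗b_n, (a_0⊗⋯⊗a_m) ⋄ b = (a_0 b)⊗a_1⊗⋯⊗a_m, and (a_0⊗⋯⊗a_m) ⋄ (b_0⊗⋯⊗b_n) = (a_0b_0) ⊗ [(a_1⊗⋯⊗a_m)⋄(1⊗b_1⊗⋯⊗b_n) + (1⊗a_1⊗⋯⊗a_m)⋄(b_1⊗⋯⊗b_n) + λ(a_1⊗⋯⊗a_m)⋄(b_1⊗⋯⊗b_n)].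 Then ⋄ is commutative. -/
/-- The mixable shuffle product of weight `lam` on pure tensors of `⊕_{n≥1} A^{⊗n}`:
a pure tensor `a₁ ⊗ ⋯ ⊗ aₙ` is encoded as the list `[a₁, …, aₙ]`, and a general element of
`⊕_{n≥1} A^{⊗n}` as a formal `C`-linear combination of such lists (`List A →₀ C`). -/
noncomputable def mixShuffle {C A : Type*} [CommRing C] [CommRing A] (lam : C) :
    List A → List A → (List A →₀ C)
  | [], _ => 0
  | _ :: _, [] => 0
  | [a], b :: bs => Finsupp.single ((a * b) :: bs) 1
  | a :: a2 :: as, [b] => Finsupp.single ((a * b) :: a2 :: as) 1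
  | a :: a2 :: as, b :: b2 :: bs =>
      Finsupp.mapDomain (List.cons (a * b))
        (mixShuffle lam (a2 :: as) (1 :: b2 :: bs) +
          mixShuffle lam (1 :: a2 :: as) (b2 :: bs) +
          lam • mixShuffle lam (a2 :: as) (b2 :: bs))
  termination_by l1 l2 => l1.length + l2.length
  decreasing_by all_goals simp <;> omega

/-- The bilinear extension of the mixable shuffle product to
`⊕_{n≥1} A^{⊗n}`, modelled as `List A →₀ C`. -/
noncomputable def mixShuffleL {C A : Type*} [CommRing C] [CommRing A] (lam : C)
    (f g : List A →₀ C) : List A →₀ C :=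
  f.sum fun l1 c1 => g.sum fun l2 c2 => (c1 * c2) • mixShuffle lam l1 l2

/-- `n`-th power with respect to the mixable shuffle product (defined for `n ≥ 1`). -/
noncomputable def mixShufflePow {C A : Type*} [CommRing C] [CommRing A] (lam : C)
    (f : List A →₀ C) : ℕ → (List A →₀ C)
  | 0 => 0
  | 1 => f
  | n + 2 => mixShuffleL lam (mixShufflePow lam f (n + 1)) f


theorem mixShuffle_comm {C A : Type*} [CommRing C] [CommRing A] (lam : C) :
    ∀ l1 l2 : List A, mixShuffle lam l1 l2 = mixShuffle lam l2 l1
  | [], [] => rfl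
  | [], _ :: _ => by rw [mixShuffle, mixShuffle]
  | _ :: _, [] => by rw [mixShuffle, mixShuffle]
  | [a], [b] => by simp [mixShuffle, mul_comm]
  | [a], b :: b2 :: bs => by simp [mixShuffle, mul_comm]
  | a :: a2 :: as, [b] => by simp [mixShuffle, mul_comm]
  | a :: a2 :: as, b :: b2 :: bs => by
      rw [mixShuffle, mixShuffle,
        mixShuffle_comm lam (a2 :: as) (1 :: b2 :: bs),
        mixShuffle_comm lam (1 :: a2 :: as) (b2 :: bs),
        mixShuffle_comm lam (a2 :: as) (b2 :: bs), mul_comm a b,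
        add_comm (mixShuffle lam (1 :: b2 :: bs) (a2 :: as))]
  termination_by l1 l2 => l1.length + l2.length
  decreasing_by all_goals simp <;> omega

/-- The mixable shuffle product of weight `λ` on `⊕_{n≥1} A^{⊗n}` is commutative. -/
theorem mixShuffleL_comm {C A : Type*} [CommRing C] [CommRing A] (lam : C)
    (f g : List A →₀ C) : mixShuffleL lam f g = mixShuffleL lam g f := by
  unfold mixShuffleL
  rw [Finsupp.sum_comm]
  refine Finsupp.sum_congr fun l2 _ => Finsupp.sum_congr fun l1 _ => ?_
  rw [mul_comm, mixShuffle_comm]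
end

section
/- With the mixable shuffle product ⋄ of weight λ on ⊕_{n≥1} A^{⊗n} and the operator P_A(a_1⊗⋯⊗a_m) = 1⊗a_1⊗⋯⊗a_m, the pair (⊕_{n≥1} A^{⊗n}, P_A) satisfies the Baxter identity: P_A(x)⋄P_A(y) = P_A(x⋄P_A(y)) + P_A(P_A(x)⋄y) + λP_A(x⋄y) for all x, y. -/
/-- Baxter identity on pure tensors: the defining recursion, rewritten with `1*1 = 1`. -/
lemma mixShuffle_cons_one {C A : Type*} [CommRing C] [CommRing A] (lam : C)
    (l1 l2 : List A) (h1 : l1 ≠ []) (h2 : l2 ≠ []) :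
    mixShuffle lam (1 :: l1) (1 :: l2) =
      Finsupp.mapDomain (List.cons (1 : A))
        (mixShuffle lam l1 (1 :: l2) + mixShuffle lam (1 :: l1) l2 +
          lam • mixShuffle lam l1 l2) := by
  obtain ⟨a, as, rfl⟩ := List.exists_cons_of_ne_nil h1
  obtain ⟨b, bs, rfl⟩ := List.exists_cons_of_ne_nil h2
  rw [mixShuffle]
  norm_num

/-- `mixShuffleL` of a shifted `f` against an arbitrary `g`, as a sum over `f`. -/
lemma mixShuffleL_mapDomain_left {C A : Type*} [CommRing C] [CommRing A] (lam : C)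
    (f g : List A →₀ C) :
    mixShuffleL lam (Finsupp.mapDomain (List.cons (1 : A)) f) g =
      f.sum fun l1 c1 => g.sum fun l2 c2 => (c1 * c2) • mixShuffle lam (1 :: l1) l2 := by
  rw [mixShuffleL]
  refine Finsupp.sum_mapDomain_index (fun l => ?_) (fun l m₁ m₂ => ?_)
  · simp
  · rw [← Finsupp.sum_add]
    exact Finsupp.sum_congr fun l2 _ => by rw [add_mul, add_smul]

/-- `mixShuffleL` against a shifted `g`, as a sum over `g` inside. -/
lemma mixShuffleL_mapDomain_right {C A : Type*} [CommRing C] [CommRing A] (lam : C)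
    (f g : List A →₀ C) :
    mixShuffleL lam f (Finsupp.mapDomain (List.cons (1 : A)) g) =
      f.sum fun l1 c1 => g.sum fun l2 c2 => (c1 * c2) • mixShuffle lam l1 (1 :: l2) := by
  rw [mixShuffleL]
  refine Finsupp.sum_congr fun l1 _ => ?_
  refine Finsupp.sum_mapDomain_index (fun l => ?_) (fun l m₁ m₂ => ?_)
  · simp
  · rw [mul_add, add_smul]


/-- Both arguments shifted. -/
lemma mixShuffleL_mapDomain_both {C A : Type*} [CommRing C] [CommRing A] (lam : C)
    (f g : List A →₀ C) :
    mixShuffleL lam (Finsupp.mapDomain (List.cons (1 : A)) f)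
        (Finsupp.mapDomain (List.cons (1 : A)) g) =
      f.sum fun l1 c1 => g.sum fun l2 c2 =>
        (c1 * c2) • mixShuffle lam (1 :: l1) (1 :: l2) := by
  rw [mixShuffleL_mapDomain_left]
  refine Finsupp.sum_congr fun l1 _ => ?_
  refine Finsupp.sum_mapDomain_index (fun l => ?_) (fun l m₁ m₂ => ?_)
  · simp
  · rw [mul_add, add_smul]

/-- With the Baxter operator `P_A(a₁⊗⋯⊗aₘ) = 1⊗a₁⊗⋯⊗aₘ` (i.e. `Finsupp.mapDomain (List.cons 1)`),
the mixable shuffle algebra `⊕_{n≥1} A^{⊗n}` satisfies the Baxter identity of weight `λ`. -/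
theorem mixShuffle_baxter_identity {C A : Type*} [CommRing C] [CommRing A] (lam : C)
    (f g : List A →₀ C) (hf : ∀ l ∈ f.support, l ≠ []) (hg : ∀ l ∈ g.support, l ≠ []) :
    mixShuffleL lam (Finsupp.mapDomain (List.cons (1 : A)) f)
        (Finsupp.mapDomain (List.cons (1 : A)) g) =
      Finsupp.mapDomain (List.cons (1 : A))
          (mixShuffleL lam f (Finsupp.mapDomain (List.cons (1 : A)) g)) +
        Finsupp.mapDomain (List.cons (1 : A))
          (mixShuffleL lam (Finsupp.mapDomain (List.cons (1 : A)) f) g) +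
        lam • Finsupp.mapDomain (List.cons (1 : A)) (mixShuffleL lam f g) := by
  rw [mixShuffleL_mapDomain_both, mixShuffleL_mapDomain_right,
    mixShuffleL_mapDomain_left, mixShuffleL]
  simp only [Finsupp.mapDomain_sum, Finsupp.mapDomain_smul, Finsupp.smul_sum,
    ← Finsupp.sum_add]
  refine Finsupp.sum_congr fun l1 hl1 => Finsupp.sum_congr fun l2 hl2 => ?_
  rw [mixShuffle_cons_one lam l1 l2 (hf l1 hl1) (hg l2 hl2)]
  simp only [Finsupp.mapDomain_add, Finsupp.mapDomain_smul, smul_add]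
  rw [smul_comm lam]
end

section
/- In the free Baxter algebra of weight λ on one generator x (the mixable shuffle algebra on C[x]), for every n ≥ 1, (1⊗x)^n = ∑_{I} S(n,I) · (1 ⊗ x^{i_1} ⊗ ⋯ ⊗ x^{i_k}), where the sum is over compositions I = (i_1,…,i_k) of n into positive parts, and S(n,I) = (n choose i_1,…,i_k) · λ^{n-k} (multinomial coefficient times λ^{n-ℓ(I)}). -/
open Finset

namespace List

variable {α β : Type*}

theorem modify_perm_cons_eraseIdx (f : α → α) {l : List α} {i : ℕ} (h : i < l.length) :
    l.modify i f ~ f l[i] :: l.eraseIdx i := by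
  rw [modify_eq_take_cons_drop h, eraseIdx_eq_take_drop_succ]
  exact perm_middle

theorem map_modify (g : α → β) {f : α → α} {f' : β → β} (h : ∀ a, g (f a) = f' (g a)) :
    ∀ (l : List α) (i : ℕ), (l.modify i f).map g = (l.map g).modify i f'
  | [], _ => by simp
  | a :: l, 0 => by simp [h]
  | a :: l, i + 1 => by simp [map_modify g h l i]

theorem modify_pred_modify_succ (l : List ℕ) (j : ℕ) :
    (l.modify j (· + 1)).modify j (· - 1) = l := by
  rw [modify_modify_eq, show ((· - 1) ∘ (· + 1) : ℕ → ℕ) = id from funext (Nat.add_sub_cancel · 1),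
    modify_id]

@[simp]
theorem multinomial_nil : ([] : List ℕ).multinomial = 1 :=
  rfl

theorem multinomial_zero_cons (l : List ℕ) : (0 :: l).multinomial = l.multinomial := by
  simp [multinomial_cons]

theorem multinomial_perm {l l' : List ℕ} (h : l ~ l') : l.multinomial = l'.multinomial :=
  congrArg Multiset.multinomial (Multiset.coe_eq_coe.mpr h)

theorem prod_factorial_mul_multinomial (l : List ℕ) :
    (l.map Nat.factorial).prod * l.multinomial = l.sum.factorial := by
  induction l with
  | nil => rfl
  | cons a l ih =>
    rw [map_cons, prod_cons, multinomial_cons, sum_cons, Nat.choose_symm_add,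
      ← Nat.add_choose_mul_factorial_mul_factorial, ← ih]
    ring

theorem prod_factorial_pos (l : List ℕ) : 0 < (l.map Nat.factorial).prod :=
  prod_pos fun _ ha => by obtain ⟨a, -, rfl⟩ := mem_map.mp ha; exact a.factorial_pos

theorem _root_.Nat.multinomial_univ_get (l : List ℕ) :
    Nat.multinomial univ l.get = l.multinomial := by
  refine Nat.eq_of_mul_eq_mul_left (prod_factorial_pos l) ?_
  have := Nat.multinomial_spec univ l.get
  simp only [get_eq_getElem, Fin.prod_univ_fun_getElem, Fin.sum_univ_getElem] at this
  rw [this, prod_factorial_mul_multinomial]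

theorem multinomial_modify_pred_insertIdx_one {l : List ℕ} {j : ℕ} (hj : j ≤ l.length) :
    ((l.insertIdx j 1).modify j (· - 1)).multinomial = l.multinomial := by
  have hj' : j < (l.insertIdx j 1).length := by
    rw [length_insertIdx_of_le_length hj]
    omega
  rw [multinomial_perm ((l.insertIdx j 1).modify_perm_cons_eraseIdx _ hj'),
    getElem_insertIdx_self, eraseIdx_insertIdx_self, Nat.sub_self, multinomial_zero_cons]

theorem prod_factorial_mul_multinomial_modify_pred {l : List ℕ} {j : ℕ} (hj : j < l.length)
    (hpos : 0 < l[j]) :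
    (l.map Nat.factorial).prod * (l.modify j (· - 1)).multinomial =
      l[j] * (l.sum - 1).factorial := by
  have hl := (getElem_cons_eraseIdx_perm hj).symm
  have hmod := l.modify_perm_cons_eraseIdx (· - 1) hj
  calc (l.map Nat.factorial).prod * (l.modify j (· - 1)).multinomial
      = l[j] * (((l.modify j (· - 1)).map Nat.factorial).prod *
          (l.modify j (· - 1)).multinomial) := by
        rw [(hl.map _).prod_eq, (hmod.map _).prod_eq, map_cons, map_cons, prod_cons, prod_cons,
          ← Nat.mul_factorial_pred hpos.ne']
        ring
    _ = l[j] * (l.sum - 1).factorial := by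
        rw [prod_factorial_mul_multinomial, hmod.sum_eq, hl.sum_eq, sum_cons, sum_cons]
        congr 2
        omega

theorem sum_multinomial_modify_pred {l : List ℕ} (hl : l ≠ []) (hpos : ∀ a ∈ l, 0 < a) :
    ∑ j ∈ Finset.range l.length, (l.modify j (· - 1)).multinomial = l.multinomial := by
  refine Nat.eq_of_mul_eq_mul_left (prod_factorial_pos l) ?_
  rw [Finset.sum_range, mul_sum, prod_factorial_mul_multinomial,
    sum_congr rfl fun j _ =>
      prod_factorial_mul_multinomial_modify_pred j.2 (hpos _ (getElem_mem _)),
    ← sum_mul, Fin.sum_univ_getElem, Nat.mul_factorial_pred (l.sum_pos hpos hl).ne']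

end List

namespace Composition

variable {n : ℕ} {M : Type*} [AddCommMonoid M]

theorem mem_image_blocks {l : List ℕ} :
    l ∈ (univ : Finset (Composition n)).image blocks ↔ (∀ i ∈ l, 0 < i) ∧ l.sum = n := by
  simp only [mem_image, mem_univ, true_and]
  constructor
  · rintro ⟨c, rfl⟩
    exact ⟨fun _ => c.blocks_pos, c.blocks_sum⟩
  · rintro ⟨hpos, hsum⟩
    exact ⟨⟨l, hpos _, hsum⟩, rfl⟩

theorem sum_eq_sum_image_blocks (F : List ℕ → M) :
    ∑ c : Composition n, F c.blocks = ∑ l ∈ (univ : Finset (Composition n)).image blocks, F l :=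
  (sum_image fun _ _ _ _ h => Composition.ext h).symm

theorem sum_sum_insertIdx_one (g : List ℕ → ℕ → M) :
    ∑ c : Composition n, ∑ j ∈ range (c.length + 1), g (c.blocks.insertIdx j 1) j =
      ∑ c : Composition (n + 1), ∑ j ∈ (range c.length).filter (fun j => c.blocks[j]? = some 1),
        g c.blocks j := by
  rw [sum_eq_sum_image_blocks (fun l => ∑ j ∈ range (l.length + 1), g (l.insertIdx j 1) j),
    sum_eq_sum_image_blocks fun l => ∑ j ∈ (range l.length).filter (fun j => l[j]? = some 1), g l j,
    sum_sigma', sum_sigma']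
  refine sum_nbij' (fun p => ⟨p.1.insertIdx p.2 1, p.2⟩) (fun p => ⟨p.1.eraseIdx p.2, p.2⟩)
    ?_ ?_ ?_ ?_ (fun _ _ => rfl)
  · rintro ⟨l, j⟩ h
    simp only [mem_sigma, mem_image_blocks, mem_range, mem_filter] at h ⊢
    obtain ⟨⟨hpos, hsum⟩, hj⟩ := h
    have hperm := List.perm_insertIdx 1 l (by omega : j ≤ l.length)
    refine ⟨⟨fun i hi => ?_, ?_⟩, ?_, ?_⟩
    · rcases List.mem_cons.mp (hperm.subset hi) with rfl | hi
      · exact one_pos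
      · exact hpos i hi
    · rw [hperm.sum_eq, List.sum_cons, hsum, add_comm]
    · rw [List.length_insertIdx_of_le_length (by omega)]
      omega
    · rw [List.getElem?_insertIdx_self, if_pos (by omega)]
  · rintro ⟨l, j⟩ h
    simp only [mem_sigma, mem_image_blocks, mem_range, mem_filter] at h ⊢
    obtain ⟨⟨hpos, hsum⟩, hj, hl⟩ := h
    have hl1 : l[j] = 1 := by simpa [hj] using hl
    refine ⟨⟨fun i hi => hpos i (List.mem_of_mem_eraseIdx hi), ?_⟩, ?_⟩
    · have := (List.getElem_cons_eraseIdx_perm hj).sum_eq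
      rw [List.sum_cons, hl1, hsum] at this
      omega
    · rw [List.length_eraseIdx_of_lt hj]
      omega
  · rintro ⟨l, j⟩ -
    simp only [List.eraseIdx_insertIdx_self]
  · rintro ⟨l, j⟩ h
    simp only [mem_sigma, mem_range, mem_filter] at h
    obtain ⟨-, hj, hl⟩ := h
    have hl1 : l[j] = 1 := by simpa [hj] using hl
    simp only [← hl1, List.insertIdx_eraseIdx_getElem hj]

theorem sum_sum_modify_succ (g : List ℕ → ℕ → M) :
    ∑ c : Composition n, ∑ j ∈ range c.length, g (c.blocks.modify j (· + 1)) j =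
      ∑ c : Composition (n + 1), ∑ j ∈ (range c.length).filter (fun j => c.blocks[j]? ≠ some 1),
        g c.blocks j := by
  rw [sum_eq_sum_image_blocks (fun l => ∑ j ∈ range l.length, g (l.modify j (· + 1)) j),
    sum_eq_sum_image_blocks fun l => ∑ j ∈ (range l.length).filter (fun j => l[j]? ≠ some 1), g l j,
    sum_sigma', sum_sigma']
  refine sum_nbij' (fun p => ⟨p.1.modify p.2 (· + 1), p.2⟩)
    (fun p => ⟨p.1.modify p.2 (· - 1), p.2⟩) ?_ ?_ ?_ ?_ (fun _ _ => rfl)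
  · rintro ⟨l, j⟩ h
    simp only [mem_sigma, mem_image_blocks, mem_range, mem_filter] at h ⊢
    obtain ⟨⟨hpos, hsum⟩, hj⟩ := h
    have hl := List.getElem_cons_eraseIdx_perm hj
    have hmod := l.modify_perm_cons_eraseIdx (· + 1) hj
    have hj0 := hpos _ (List.getElem_mem hj)
    refine ⟨⟨fun i hi => ?_, ?_⟩, by simpa using hj, by simp [hj]; omega⟩
    · rcases List.mem_cons.mp (hmod.subset hi) with rfl | hi
      · exact Nat.succ_pos _
      · exact hpos i (List.mem_of_mem_eraseIdx hi)
    · rw [hmod.sum_eq, ← hsum, ← hl.sum_eq, List.sum_cons, List.sum_cons]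
      omega
  · rintro ⟨l, j⟩ h
    simp only [mem_sigma, mem_image_blocks, mem_range, mem_filter] at h ⊢
    obtain ⟨⟨hpos, hsum⟩, hj, hl1⟩ := h
    have hl := List.getElem_cons_eraseIdx_perm hj
    have hmod := l.modify_perm_cons_eraseIdx (· - 1) hj
    have h2 : 2 ≤ l[j] := by
      have := hpos _ (List.getElem_mem hj)
      simp [hj] at hl1
      omega
    refine ⟨⟨fun i hi => ?_, ?_⟩, by simpa using hj⟩
    · rcases List.mem_cons.mp (hmod.subset hi) with rfl | hi
      · omega
      · exact hpos i (List.mem_of_mem_eraseIdx hi)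
    · rw [hmod.sum_eq, ← hl.sum_eq, List.sum_cons] at *
      omega
  · rintro ⟨l, j⟩ -
    rw [List.modify_pred_modify_succ]
  · rintro ⟨l, j⟩ h
    simp only [mem_sigma, mem_image_blocks, mem_range, mem_filter] at h
    obtain ⟨⟨hpos, -⟩, hj, -⟩ := h
    have := hpos _ (List.getElem_mem hj)
    simp [List.modify_eq_set, hj, Nat.sub_add_cancel this]

theorem sum_single_multinomial_succ {R : Type*} [CommSemiring R] (lam : R) (n : ℕ) :
    ∑ c : Composition (n + 1),
        Finsupp.single c.blocks ((c.blocks.multinomial : R) * lam ^ (n + 1 - c.length)) =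
      ∑ c : Composition n, ((c.blocks.multinomial : R) * lam ^ (n - c.length)) •
        (∑ j ∈ range (c.length + 1), Finsupp.single (c.blocks.insertIdx j 1) (1 : R) +
          lam • ∑ j ∈ range c.length, Finsupp.single (c.blocks.modify j (· + 1)) (1 : R)) := by
  set F : List ℕ → ℕ → (List ℕ →₀ R) := fun l j =>
    Finsupp.single l (((l.modify j (· - 1)).multinomial : R) * lam ^ (n + 1 - l.length)) with hF
  calc _ = ∑ c : Composition (n + 1), ∑ j ∈ range c.length, F c.blocks j := by
        refine sum_congr rfl fun c _ => ?_
        rw [← c.blocks.sum_multinomial_modify_pred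
            (List.ne_nil_of_length_pos (c.length_pos_of_pos n.succ_pos)) fun _ => c.blocks_pos,
          Nat.cast_sum, sum_mul, Finsupp.single_finsetSum]
    _ = ∑ c : Composition (n + 1),
            ∑ j ∈ (range c.length).filter (fun j => c.blocks[j]? = some 1), F c.blocks j +
          ∑ c : Composition (n + 1),
            ∑ j ∈ (range c.length).filter (fun j => c.blocks[j]? ≠ some 1), F c.blocks j := by
        simp only [← sum_add_distrib, sum_filter_add_sum_filter_not]
    _ = ∑ c : Composition n, ∑ j ∈ range (c.length + 1), F (c.blocks.insertIdx j 1) j +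
          ∑ c : Composition n, ∑ j ∈ range c.length, F (c.blocks.modify j (· + 1)) j := by
        rw [sum_sum_insertIdx_one, sum_sum_modify_succ]
    _ = _ := by
        simp only [smul_add, smul_sum, sum_add_distrib, Finsupp.smul_single, smul_eq_mul, mul_one]
        congr 1 <;> refine sum_congr rfl fun c _ => sum_congr rfl fun j hj => ?_
        · have hj : j ≤ c.blocks.length := Nat.lt_succ_iff.mp (mem_range.mp hj)
          simp only [hF]
          rw [List.multinomial_modify_pred_insertIdx_one hj,
            List.length_insertIdx_of_le_length hj, Nat.add_sub_add_right]
        · simp only [hF]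
          rw [List.modify_pred_modify_succ, List.length_modify, mul_assoc, ← pow_succ,
            Nat.sub_add_comm c.length_le]

end Composition

section MixShuffle

variable {C A : Type*} [CommRing C] [CommRing A] (lam : C)

theorem mixShuffle_cons_singleton (a b : A) (as : List A) :
    mixShuffle lam (a :: as) [b] = Finsupp.single ((a * b) :: as) (1 : C) := by
  cases as <;> simp [mixShuffle]

theorem mixShuffle_cons_pair (x : A) (us : List A) (u v : A) :
    mixShuffle lam (u :: us) [v, x] =
      (∑ j ∈ range (us.length + 1), Finsupp.single (u * v :: us.insertIdx j x) (1 : C)) +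
        lam • ∑ j ∈ range us.length, Finsupp.single (u * v :: us.modify j (· * x)) (1 : C) := by
  induction us generalizing u v with
  | nil => simp [mixShuffle]
  | cons w ws ih =>
    rw [mixShuffle, ih, mixShuffle_cons_singleton, mixShuffle_cons_singleton]
    simp only [List.length_cons, sum_range_succ', Finsupp.mapDomain_add,
      Finsupp.mapDomain_smul, Finsupp.mapDomain_finsetSum, Finsupp.mapDomain_single,
      List.insertIdx_succ_cons, List.insertIdx_zero, List.modify_succ_cons,
      List.modify_zero_cons, mul_one, one_mul, smul_add]
    abel

theorem mixShuffle_one_cons_map_pow (x : A) (l : List ℕ) :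
    mixShuffle lam ((1 : A) :: l.map (x ^ ·)) [1, x] =
      Finsupp.mapDomain (fun l : List ℕ => (1 : A) :: l.map (x ^ ·))
        (∑ j ∈ range (l.length + 1), Finsupp.single (l.insertIdx j 1) (1 : C) +
          lam • ∑ j ∈ range l.length, Finsupp.single (l.modify j (· + 1)) (1 : C)) := by
  rw [mixShuffle_cons_pair]
  simp only [Finsupp.mapDomain_add, Finsupp.mapDomain_smul, Finsupp.mapDomain_finsetSum,
    Finsupp.mapDomain_single, List.length_map, one_mul, List.map_insertIdx, pow_one,
    List.map_modify (x ^ ·) (f := (· + 1)) (f' := (· * x)) (pow_succ x)]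

theorem mixShuffleL_sum_single_one {ι : Type*} (s : Finset ι) (t : ι → List A) (a : ι → C)
    (l : List A) :
    mixShuffleL lam (∑ i ∈ s, Finsupp.single (t i) (a i)) (Finsupp.single l 1) =
      ∑ i ∈ s, a i • mixShuffle lam (t i) l := by
  have hsingle : ∀ (l₁ : List A) (c₁ : C), (Finsupp.single l (1 : C)).sum
      (fun l₂ c₂ => (c₁ * c₂) • mixShuffle lam l₁ l₂) = c₁ • mixShuffle lam l₁ l := by
    intro l₁ c₁
    rw [Finsupp.sum_single_index (by simp), mul_one]
  simp only [mixShuffleL, hsingle]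
  exact (map_sum (Finsupp.linearCombination C fun l₁ => mixShuffle lam l₁ l) _ s).trans
    (sum_congr rfl fun i _ => Finsupp.linearCombination_single C _ _)

theorem mixShufflePow_succ (f : List A →₀ C) {n : ℕ} (hn : 1 ≤ n) :
    mixShufflePow lam f (n + 1) = mixShuffleL lam (mixShufflePow lam f n) f := by
  obtain ⟨m, rfl⟩ := Nat.exists_eq_add_of_le' hn
  rfl

end MixShuffle

open Polynomial in
/-- In the free Baxter algebra of weight `λ` on one generator `x` (the mixable shuffle algebra
on `C[x]`), for `n ≥ 1`:
`(1⊗x)^n = ∑_I (n choose i₁,…,i_k) λ^{n-k} · (1 ⊗ x^{i₁} ⊗ ⋯ ⊗ x^{i_k})`,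
the sum being over compositions `I = (i₁,…,i_k)` of `n` into positive parts. -/
theorem mixShuffle_pow_one_tensor_x {C : Type*} [CommRing C] (lam : C) (n : ℕ) (hn : 1 ≤ n) :
    mixShufflePow lam (Finsupp.single [(1 : Polynomial C), X] (1 : C)) n =
      ∑ c : Composition n,
        Finsupp.single ((1 : Polynomial C) :: c.blocks.map (fun i => (X : Polynomial C) ^ i))
          ((Nat.multinomial Finset.univ c.blocksFun : C) * lam ^ (n - c.length)) := by
  simp only [Composition.blocksFun, Nat.multinomial_univ_get]
  induction n, hn using Nat.le_induction with
  | base =>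
    rw [Fintype.sum_eq_single (Composition.single 1 one_pos) fun c hc => (hc
      ((Composition.eq_single_iff_length one_pos).mpr
        (le_antisymm c.length_le (c.length_pos_of_pos one_pos)))).elim]
    simp [mixShufflePow, List.multinomial_cons]
  | succ n hn ih =>
    rw [mixShufflePow_succ lam _ hn, ih, mixShuffleL_sum_single_one]
    simp only [mixShuffle_one_cons_map_pow, Composition.blocks_length, ← Finsupp.mapDomain_smul]
    rw [← Finsupp.mapDomain_finsetSum, ← Composition.sum_single_multinomial_succ,
      Finsupp.mapDomain_finsetSum]
    simp only [Finsupp.mapDomain_single]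
end

section
/- In the free Baxter algebra ⊕_{n≥1} C^{⊗n} ≅ ⊕_{n≥1} C·(1^{⊗n}) on C of weight λ, for every prime p and every n ≥ 1, (1^{⊗n})^p ≡ λ^{(n-1)(p-1)} · 1^{⊗n} modulo p, where 1^{⊗n} denotes 1⊗⋯⊗1 (n factors) and powers are taken with respect to the mixable shuffle product. -/
section Abstract
variable {R : Type*} [CommRing R]

noncomputable def fN (lam : R) : ℕ → ℕ → (ℕ →₀ R)
  | 0, _ => 0
  | _ + 1, 0 => 0
  | 1, n + 1 => Finsupp.single (n + 1) 1
  | m + 2, 1 => Finsupp.single (m + 2) 1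
  | m + 2, n + 2 =>
      Finsupp.mapDomain Nat.succ
        (fN lam (m + 1) (n + 2) + fN lam (m + 2) (n + 1) + lam • fN lam (m + 1) (n + 1))
  termination_by a b => a + b

noncomputable def mulN (lam : R) (x y : ℕ →₀ R) : ℕ →₀ R :=
  x.sum fun a c => y.sum fun b d => (c * d) • fN lam a b

noncomputable def powN (lam : R) (x : ℕ →₀ R) : ℕ → (ℕ →₀ R)
  | 0 => 0
  | 1 => x
  | n + 2 => mulN lam (powN lam x (n + 1)) x

lemma fN_apply_zero (lam : R) : ∀ a b : ℕ, fN lam a b 0 = 0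
  | 0, _ => by rw [fN]; simp
  | _ + 1, 0 => by rw [fN]; simp
  | 1, n + 1 => by rw [fN]; simp [Finsupp.single_apply]
  | m + 2, 1 => by rw [fN]; simp [Finsupp.single_apply]
  | m + 2, n + 2 => by
      rw [fN]
      exact Finsupp.mapDomain_notin_range _ _ (by simp [Set.range, Nat.succ_ne_zero])

lemma mulN_apply_zero (lam : R) (x y : ℕ →₀ R) : mulN lam x y 0 = 0 := by
  unfold mulN
  simp [Finsupp.sum_apply, fN_apply_zero]

lemma powN_apply_zero (lam : R) (x : ℕ →₀ R) (hx : x 0 = 0) :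
    ∀ k, powN lam x k 0 = 0
  | 0 => by rw [powN]; simp
  | 1 => by rw [powN]; exact hx
  | k + 2 => by rw [powN]; exact mulN_apply_zero _ _ _

end Abstract

-- ℕ combinatorial identities
lemma hockey (m k : ℕ) : ∑ j ∈ Finset.range m, j.choose k = m.choose (k + 1) := by
  induction m with
  | zero => simp
  | succ m ih => rw [Finset.sum_range_succ, ih, Nat.choose_succ_succ']; ring

lemma key3 (a b m : ℕ) :
    ∑ j ∈ Finset.range m,
      (j.choose a * j.choose (b + 1) + j.choose (a + 1) * j.choose b
        + j.choose a * j.choose b) = m.choose (a + 1) * m.choose (b + 1) := by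
  induction m with
  | zero => simp
  | succ m ih =>
      rw [Finset.sum_range_succ, ih, Nat.choose_succ_succ (m) a, Nat.choose_succ_succ (m) b]
      ring

noncomputable def GX : ℕ → ℕ → Polynomial ℤ
  | 0, _ => 0
  | d + 1, m => Polynomial.X ^ d * (m.choose d : Polynomial ℤ)

noncomputable def PsiL (m : ℕ) : (ℕ →₀ Polynomial ℤ) →ₗ[Polynomial ℤ] Polynomial ℤ :=
  Finsupp.linearCombination _ fun n => GX n m

lemma PsiL_apply (m : ℕ) (x : ℕ →₀ Polynomial ℤ) :
    PsiL m x = x.sum fun n c => c * GX n m := by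
  rw [PsiL, Finsupp.linearCombination_apply]; rfl

lemma GX_one (m : ℕ) : GX 1 m = 1 := by simp [GX]

lemma GX_succ (n m : ℕ) (hn : 1 ≤ n) :
    GX (n + 1) m = Polynomial.X * ∑ j ∈ Finset.range m, GX n j := by
  obtain ⟨d, rfl⟩ := Nat.exists_eq_add_of_le' hn
  show GX (d + 2) m = _
  rw [GX]
  have hGX : ∀ j, GX (d + 1) j = Polynomial.X ^ d * (j.choose d : Polynomial ℤ) := fun j => rfl
  simp only [hGX]
  rw [← Finset.mul_sum, ← Nat.cast_sum, hockey]
  ring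

lemma PsiL_mapDomain_succ (m : ℕ) (y : ℕ →₀ Polynomial ℤ) (hy : y 0 = 0) :
    PsiL m (Finsupp.mapDomain Nat.succ y) =
      Polynomial.X * ∑ j ∈ Finset.range m, PsiL j y := by
  rw [PsiL_apply, Finsupp.sum_mapDomain_index (fun b => by simp) (fun b c d => by ring)]
  have h1 : (y.sum fun n c => c * GX (n + 1) m) =
      y.sum fun n c => Polynomial.X * ∑ j ∈ Finset.range m, c * GX n j := by
    refine Finsupp.sum_congr fun n hn => ?_
    have hn1 : 1 ≤ n := by
      rcases Nat.eq_zero_or_pos n with h | h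
      · exact absurd (Finsupp.mem_support_iff.mp hn) (by rw [h, hy]; simp)
      · exact h
    rw [GX_succ n m hn1, ← Finset.mul_sum]
    ring
  rw [h1]
  rw [Finsupp.sum, ← Finset.mul_sum, Finset.sum_comm]
  simp only [PsiL_apply, Finsupp.sum]
lemma GX_succ_eq (s j : ℕ) : GX (s + 1) j = Polynomial.X ^ s * (j.choose s : Polynomial ℤ) := rfl

lemma L1 : ∀ a b m : ℕ, PsiL m (fN Polynomial.X a b) = GX a m * GX b m
  | 0, b, m => by rw [fN]; simp [GX]
  | a + 1, 0, m => by
      rw [fN]; show (0 : Polynomial ℤ) = GX (a + 1) m * GX 0 m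
      simp [GX]
  | 1, b + 1, m => by
      rw [fN, PsiL_apply, Finsupp.sum_single_index (by simp)]
      simp [GX_one]
  | a + 2, 1, m => by
      rw [fN, PsiL_apply, Finsupp.sum_single_index (by simp)]
      simp [GX_one]
  | a + 2, b + 2, m => by
      rw [fN]
      rw [PsiL_mapDomain_succ m _ (by
        simp [Finsupp.add_apply, Finsupp.smul_apply, fN_apply_zero])]
      have hPsi : ∀ j, PsiL j
          (fN (Polynomial.X : Polynomial ℤ) (a + 1) (b + 2) +
            fN (Polynomial.X : Polynomial ℤ) (a + 2) (b + 1) +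
            (Polynomial.X : Polynomial ℤ) • fN (Polynomial.X : Polynomial ℤ) (a + 1) (b + 1)) =
          GX (a + 1) j * GX (b + 2) j + GX (a + 2) j * GX (b + 1) j +
            Polynomial.X * (GX (a + 1) j * GX (b + 1) j) := by
        intro j
        rw [map_add, map_add, map_smul, smul_eq_mul,
          L1 (a + 1) (b + 2) j, L1 (a + 2) (b + 1) j, L1 (a + 1) (b + 1) j]
      rw [Finset.sum_congr rfl fun j _ => hPsi j]
      have hterm : ∀ j : ℕ,
          GX (a + 1) j * GX (b + 2) j + GX (a + 2) j * GX (b + 1) j +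
            Polynomial.X * (GX (a + 1) j * GX (b + 1) j) =
          Polynomial.X ^ (a + b + 1) *
            ((j.choose a * j.choose (b + 1) + j.choose (a + 1) * j.choose b +
              j.choose a * j.choose b : ℕ) : Polynomial ℤ) := by
        intro j
        simp only [GX_succ_eq]
        push_cast
        ring
      rw [Finset.sum_congr rfl fun j _ => hterm j, ← Finset.mul_sum, ← Nat.cast_sum, key3]
      simp only [GX_succ_eq]
      push_cast
      ring
  termination_by a b m => a + b

lemma PsiL_mulN (m : ℕ) (x y : ℕ →₀ Polynomial ℤ) :
    PsiL m (mulN Polynomial.X x y) = PsiL m x * PsiL m y := by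
  unfold mulN
  rw [map_finsuppSum]
  have h1 : ∀ a c, PsiL m (y.sum fun b d => (c * d) • fN (Polynomial.X : Polynomial ℤ) a b) =
      y.sum fun b d => (c * d) * (GX a m * GX b m) := by
    intro a c
    rw [map_finsuppSum]
    exact Finsupp.sum_congr fun b _ => by rw [map_smul, smul_eq_mul, L1]
  rw [Finsupp.sum_congr (g2 := fun a c => y.sum fun b d => (c * d) * (GX a m * GX b m))
    fun a _ => h1 a (x a)]
  rw [PsiL_apply, PsiL_apply, Finsupp.sum_mul]
  refine Finsupp.sum_congr fun a _ => ?_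
  rw [Finsupp.mul_sum]
  exact Finsupp.sum_congr fun b _ => by ring

lemma PsiL_powN (m : ℕ) (x : ℕ →₀ Polynomial ℤ) :
    ∀ k : ℕ, PsiL m (powN Polynomial.X x (k + 1)) = PsiL m x ^ (k + 1)
  | 0 => by rw [powN]; ring
  | k + 1 => by
      rw [show k + 1 + 1 = k + 2 from rfl, powN, PsiL_mulN, PsiL_powN m x k]; ring

lemma PsiL_eq_range (m : ℕ) (x : ℕ →₀ Polynomial ℤ) :
    PsiL m x = ∑ k ∈ Finset.range (m + 2), x k * GX k m := by
  rw [PsiL_apply, Finsupp.sum]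
  have h1 : ∑ k ∈ x.support, x k * GX k m =
      ∑ k ∈ x.support ∪ Finset.range (m + 2), x k * GX k m :=
    Finset.sum_subset Finset.subset_union_left fun k _ hk => by
      rw [Finsupp.notMem_support_iff.mp hk, zero_mul]
  have h2 : ∑ k ∈ Finset.range (m + 2), x k * GX k m =
      ∑ k ∈ x.support ∪ Finset.range (m + 2), x k * GX k m :=
    Finset.sum_subset Finset.subset_union_right fun k _ hkr => by
      have hk2 : m + 2 ≤ k := by simpa using Finset.mem_range.not.mp hkr
      obtain ⟨d, rfl⟩ : ∃ d, k = d + 1 := ⟨k - 1, by omega⟩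
      rw [GX_succ_eq, Nat.choose_eq_zero_of_lt (by omega)]
      simp
  exact h1.trans h2.symm

lemma inv_lemma (p : ℕ) (hp : p.Prime) (x : ℕ →₀ Polynomial ℤ) (h0 : x 0 = 0)
    (hdvd : ∀ m, Polynomial.C (p : ℤ) ∣ PsiL m x) :
    ∀ k, Polynomial.C (p : ℤ) ∣ x k := by
  intro k
  induction k using Nat.strong_induction_on with
  | _ k ih =>
    match k with
    | 0 => rw [h0]; exact dvd_zero _
    | m + 1 =>
      have hrange := PsiL_eq_range m x
      rw [Finset.sum_range_succ] at hrange
      have hlast : x (m + 1) * GX (m + 1) m =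
          PsiL m x - ∑ k ∈ Finset.range (m + 1), x k * GX k m := by
        rw [hrange]; ring
      have hdvd2 : Polynomial.C (p : ℤ) ∣ x (m + 1) * GX (m + 1) m := by
        rw [hlast]
        exact dvd_sub (hdvd m)
          (Finset.dvd_sum fun k hk =>
            Dvd.dvd.mul_right (ih k (Finset.mem_range.mp hk)) _)
      have hprime : Prime (Polynomial.C (p : ℤ)) :=
        Polynomial.prime_C_iff.mpr (Nat.prime_iff_prime_int.mp hp)
      rcases hprime.dvd_mul.mp hdvd2 with h | h
      · exact h
      · exfalso
        rw [GX_succ_eq, Nat.choose_self, Nat.cast_one, mul_one] at h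
        have hX := hprime.dvd_of_dvd_pow h
        rw [Polynomial.C_dvd_iff_dvd_coeff] at hX
        have h1 := hX 1
        rw [Polynomial.coeff_X_one] at h1
        have := Int.le_of_dvd one_pos h1
        have hlt : (1 : ℤ) < (p : ℤ) := by exact_mod_cast hp.one_lt
        omega

lemma main_poly (p : ℕ) (hp : p.Prime) (n : ℕ) (hn : 1 ≤ n) :
    ∃ g : ℕ →₀ Polynomial ℤ,
      powN (Polynomial.X : Polynomial ℤ) (Finsupp.single n 1) p =
        (Polynomial.X : Polynomial ℤ) ^ ((n - 1) * (p - 1)) • Finsupp.single n 1 +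
          (p : Polynomial ℤ) • g := by
  haveI := Fact.mk hp
  classical
  set e := (n - 1) * (p - 1) with he
  set x0 := powN (Polynomial.X : Polynomial ℤ) (Finsupp.single n (1 : Polynomial ℤ)) p -
      (Polynomial.X : Polynomial ℤ) ^ e • Finsupp.single n (1 : Polynomial ℤ) with hx0
  have hs0 : (Finsupp.single n (1 : Polynomial ℤ)) 0 = 0 :=
    Finsupp.single_eq_of_ne (by omega)
  have h00 : x0 0 = 0 := by
    rw [hx0]
    simp [Finsupp.sub_apply, Finsupp.smul_apply, powN_apply_zero _ _ hs0, hs0,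
      Finsupp.single_apply, show ¬ n = 0 by omega]
  have hPsi_single : ∀ m, PsiL m (Finsupp.single n (1 : Polynomial ℤ)) = GX n m := by
    intro m
    rw [PsiL_apply, Finsupp.sum_single_index (by simp), one_mul]
  have hdvd : ∀ m, Polynomial.C (p : ℤ) ∣ PsiL m x0 := by
    intro m
    rw [hx0, map_sub, map_smul, smul_eq_mul, hPsi_single]
    obtain ⟨pm, hpm⟩ : ∃ pm, p = pm + 1 := ⟨p - 1, by have := hp.one_lt; omega⟩
    have hpow : PsiL m (powN (Polynomial.X : Polynomial ℤ) (Finsupp.single n 1) p) =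
        GX n m ^ p := by
      rw [hpm, PsiL_powN, hPsi_single]
    rw [hpow]
    obtain ⟨s, rfl⟩ : ∃ s, n = s + 1 := ⟨n - 1, by omega⟩
    rw [GX_succ_eq]
    set c : ℤ := (m.choose s : ℤ) with hc
    have hcast : ((m.choose s : ℕ) : Polynomial ℤ) = Polynomial.C c :=
      (Polynomial.C_eq_natCast _).symm
    rw [hcast]
    have he2 : e = s * (p - 1) := by rw [he]; simp
    have key : (Polynomial.X ^ s * Polynomial.C c) ^ p -
        (Polynomial.X : Polynomial ℤ) ^ e * (Polynomial.X ^ s * Polynomial.C c) =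
        Polynomial.X ^ (s * p) * Polynomial.C (c ^ p - c) := by
      rw [he2, hpm]
      simp only [Nat.add_sub_cancel, map_sub, map_pow, mul_pow, ← pow_mul]
      ring
    rw [key]
    have hzp : (p : ℤ) ∣ c ^ p - c := by
      have h1 : ((c ^ p - c : ℤ) : ZMod p) = 0 := by
        push_cast
        rw [ZMod.pow_card]
        ring
      exact_mod_cast (ZMod.intCast_zmod_eq_zero_iff_dvd _ _).mp h1
    exact Dvd.dvd.mul_left (map_dvd Polynomial.C hzp) _
  have hdiv := inv_lemma p hp x0 h00 hdvd
  set d : Polynomial ℤ → Polynomial ℤ :=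
    fun q => if h : Polynomial.C (p : ℤ) ∣ q then h.choose else 0 with hd
  have hCp : (Polynomial.C (p : ℤ)) ≠ 0 := by
    simp only [ne_eq, Polynomial.C_eq_zero]
    exact_mod_cast hp.ne_zero
  have hd0 : d 0 = 0 := by
    rw [hd]
    simp only
    rw [dif_pos (dvd_zero _)]
    have hspec := (dvd_zero (Polynomial.C (p : ℤ))).choose_spec
    rcases mul_eq_zero.mp hspec.symm with h | h
    · exact absurd h hCp
    · exact h
  refine ⟨x0.mapRange d hd0, ?_⟩
  have hx0g : x0 = (p : Polynomial ℤ) • x0.mapRange d hd0 := by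
    refine Finsupp.ext fun k => ?_
    have hk := hdiv k
    rw [Finsupp.smul_apply, Finsupp.mapRange_apply, hd]
    simp only
    rw [dif_pos hk, smul_eq_mul]
    rw [show ((p : ℕ) : Polynomial ℤ) = Polynomial.C ((p : ℕ) : ℤ) from
      (Polynomial.C_eq_natCast p).symm]
    exact hk.choose_spec
  rw [hx0] at hx0g
  exact sub_eq_iff_eq_add'.mp hx0g

section Transfer
variable {S : Type*} [CommRing S]

noncomputable def trC (lam : S) : (ℕ →₀ Polynomial ℤ) → (ℕ →₀ S) :=
  Finsupp.mapRange (Polynomial.aeval lam) (map_zero _)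

lemma trC_zero (lam : S) : trC lam 0 = 0 := by simp [trC]

lemma trC_single (lam : S) (n : ℕ) (c : Polynomial ℤ) :
    trC lam (Finsupp.single n c) = Finsupp.single n (Polynomial.aeval lam c) := by
  simp [trC, Finsupp.mapRange_single]

lemma trC_add (lam : S) (x y : ℕ →₀ Polynomial ℤ) :
    trC lam (x + y) = trC lam x + trC lam y := by
  simp [trC, Finsupp.mapRange_add (map_add _)]

lemma trC_smul (lam : S) (q : Polynomial ℤ) (x : ℕ →₀ Polynomial ℤ) :
    trC lam (q • x) = Polynomial.aeval lam q • trC lam x := by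
  refine Finsupp.ext fun k => ?_
  simp [trC, Finsupp.mapRange_apply, Finsupp.smul_apply, smul_eq_mul, map_mul]

lemma trC_mapDomain (lam : S) (x : ℕ →₀ Polynomial ℤ) :
    trC lam (Finsupp.mapDomain Nat.succ x) = Finsupp.mapDomain Nat.succ (trC lam x) :=
  (Finsupp.mapDomain_mapRange _ _ _ _ (map_add _)).symm

lemma trC_fN (lam : S) : ∀ a b : ℕ,
    trC lam (fN Polynomial.X a b) = fN lam a b
  | 0, b => by rw [fN, fN, trC_zero]
  | a + 1, 0 => by rw [fN, fN, trC_zero]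
  | 1, b + 1 => by rw [fN, fN, trC_single]; simp
  | a + 2, 1 => by rw [fN, fN, trC_single]; simp
  | a + 2, b + 2 => by
      rw [fN, fN, trC_mapDomain, trC_add, trC_add, trC_smul,
        trC_fN lam (a + 1) (b + 2), trC_fN lam (a + 2) (b + 1), trC_fN lam (a + 1) (b + 1)]
      simp
  termination_by a b => a + b

lemma trC_sum (lam : S) {α : Type*} (s : α →₀ Polynomial ℤ)
    (g : α → Polynomial ℤ → (ℕ →₀ Polynomial ℤ)) :
    trC lam (s.sum g) = s.sum fun a c => trC lam (g a c) := by
  refine Finsupp.ext fun k => ?_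
  rw [trC, Finsupp.mapRange_apply, Finsupp.sum_apply, Finsupp.sum_apply, Finsupp.sum,
    Finsupp.sum, map_sum]
  exact Finset.sum_congr rfl fun a _ => by rw [Finsupp.mapRange_apply]

lemma trC_mulN (lam : S) (x y : ℕ →₀ Polynomial ℤ) :
    trC lam (mulN Polynomial.X x y) = mulN lam (trC lam x) (trC lam y) := by
  have hR : mulN lam (trC lam x) (trC lam y) =
      x.sum fun a c => y.sum fun b d =>
        (Polynomial.aeval lam c * Polynomial.aeval lam d) • fN lam a b := by
    unfold mulN trC
    rw [Finsupp.sum_mapRange_index (fun a => by simp)]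
    exact Finsupp.sum_congr fun a _ => Finsupp.sum_mapRange_index (fun b => by simp)
  rw [hR]
  unfold mulN
  rw [trC_sum]
  refine Finsupp.sum_congr fun a _ => ?_
  rw [trC_sum]
  refine Finsupp.sum_congr fun b _ => ?_
  rw [trC_smul, map_mul, trC_fN]

lemma trC_powN (lam : S) (x : ℕ →₀ Polynomial ℤ) :
    ∀ k : ℕ, trC lam (powN Polynomial.X x k) = powN lam (trC lam x) k
  | 0 => by rw [powN, powN, trC_zero]
  | 1 => by rw [powN, powN]
  | k + 2 => by rw [powN, powN, trC_mulN, trC_powN lam x (k + 1)]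

end Transfer

noncomputable def repE {C : Type*} [CommRing C] : (ℕ →₀ C) → (List C →₀ C) :=
  Finsupp.mapDomain (fun k => List.replicate k (1 : C))

lemma repE_add {C : Type*} [CommRing C] (x y : ℕ →₀ C) :
    repE (x + y) = repE x + repE y := Finsupp.mapDomain_add

lemma repE_smul {C : Type*} [CommRing C] (c : C) (x : ℕ →₀ C) :
    repE (c • x) = c • repE x := Finsupp.mapDomain_smul c x

lemma mix_rep {C : Type*} [CommRing C] (lam : C) : ∀ a b : ℕ,
    mixShuffle lam (List.replicate a (1 : C)) (List.replicate b (1 : C)) =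
      repE (fN lam a b)
  | 0, b => by rw [List.replicate_zero, mixShuffle, fN]; simp [repE]
  | a + 1, 0 => by
      rw [List.replicate_succ, List.replicate_zero, mixShuffle, fN]; simp [repE]
  | 1, b + 1 => by
      rw [show List.replicate (b+1) (1:C) = 1 :: List.replicate b 1 from rfl, List.replicate_one, mixShuffle, fN]
      simp [repE, Finsupp.mapDomain_single, List.replicate_succ]
  | a + 2, 1 => by
      rw [show List.replicate (a+2) (1:C) = 1 :: 1 :: List.replicate a 1 from rfl, List.replicate_one, mixShuffle, fN]
      simp [repE, Finsupp.mapDomain_single, List.replicate_succ]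
  | a + 2, b + 2 => by
      rw [show List.replicate (a+2) (1:C) = 1 :: 1 :: List.replicate a 1 from rfl,
        show List.replicate (b+2) (1:C) = 1 :: 1 :: List.replicate b 1 from rfl,
        mixShuffle, fN]
      rw [show ((1:C) :: List.replicate a 1) = List.replicate (a+1) (1:C) from rfl,
        show ((1:C) :: List.replicate b 1) = List.replicate (b+1) (1:C) from rfl,
        show ((1:C) :: List.replicate (a+1) 1) = List.replicate (a+2) (1:C) from rfl,
        show ((1:C) :: List.replicate (b+1) 1) = List.replicate (b+2) (1:C) from rfl]
      rw [mix_rep lam (a+1) (b+2), mix_rep lam (a+2) (b+1), mix_rep lam (a+1) (b+1)]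
      rw [← repE_smul, ← repE_add, ← repE_add]
      unfold repE
      rw [← Finsupp.mapDomain_comp, ← Finsupp.mapDomain_comp]
      congr 1
      funext k
      simp [Function.comp, List.replicate_succ]
  termination_by a b => a + b

lemma mixL_rep {C : Type*} [CommRing C] (lam : C) (x y : ℕ →₀ C) :
    mixShuffleL lam (repE x) (repE y) = repE (mulN lam x y) := by
  have hL : mixShuffleL lam (repE x) (repE y) =
      x.sum fun a c => y.sum fun b d =>
        (c * d) • mixShuffle lam (List.replicate a (1 : C)) (List.replicate b 1) := by
    unfold mixShuffleL repE
    rw [Finsupp.sum_mapDomain_index (fun l => by simp)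
      (fun l c d => by simp [add_mul, add_smul, Finsupp.sum_add])]
    refine Finsupp.sum_congr fun a _ => ?_
    exact Finsupp.sum_mapDomain_index (fun l => by simp)
      (fun l c d => by simp [mul_add, add_smul])
  rw [hL]
  unfold mulN
  have repE_sum : ∀ {α : Type} (s : α →₀ C) (g : α → C → (ℕ →₀ C)),
      repE (s.sum g) = s.sum fun a c => repE (g a c) := by
    intro α s g
    have h := map_finsuppSum
      (Finsupp.mapDomain.addMonoidHom (M := C) (fun k : ℕ => List.replicate k (1 : C))) s g
    simpa [Finsupp.mapDomain.addMonoidHom_apply, repE] using h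
  rw [repE_sum]
  have hRep : (x.sum fun a c => repE (y.sum fun b d => (c * d) • fN lam a b)) =
      x.sum fun a c => y.sum fun b d => (c * d) • repE (fN lam a b) := by
    refine Finsupp.sum_congr fun a _ => ?_
    rw [repE_sum]
    exact Finsupp.sum_congr fun b _ => repE_smul _ _
  rw [hRep]
  refine Finsupp.sum_congr fun a _ => Finsupp.sum_congr fun b _ => ?_
  rw [mix_rep]

lemma mixPow_rep {C : Type*} [CommRing C] (lam : C) (x : ℕ →₀ C) :
    ∀ k : ℕ, mixShufflePow lam (repE x) k = repE (powN lam x k)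
  | 0 => by rw [mixShufflePow, powN]; simp [repE]
  | 1 => by rw [mixShufflePow, powN]
  | k + 2 => by
      rw [mixShufflePow, powN, mixPow_rep lam x (k + 1), mixL_rep]


/-- In the free Baxter algebra `⊕_{n≥1} C^{⊗n}` of weight `λ` on `C`, for every prime `p`
and every `n ≥ 1`, `(1^{⊗n})^p ≡ λ^{(n-1)(p-1)} · 1^{⊗n} (mod p)`, powers taken with respect
to the mixable shuffle product. -/
theorem mixShuffle_pow_ones {C : Type*} [CommRing C] (lam : C) (p : ℕ) (hp : p.Prime)
    (n : ℕ) (hn : 1 ≤ n) :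
    ∃ g : List C →₀ C,
      mixShufflePow lam (Finsupp.single (List.replicate n (1 : C)) (1 : C)) p =
        lam ^ ((n - 1) * (p - 1)) • Finsupp.single (List.replicate n (1 : C)) (1 : C) +
          (p : C) • g := by
  obtain ⟨g', hg'⟩ := main_poly p hp n hn
  have h2 := congrArg (trC lam) hg'
  rw [trC_powN, trC_single, map_one, trC_add, trC_smul, trC_single, map_one,
    trC_smul, map_pow, Polynomial.aeval_X] at h2
  have hφp : Polynomial.aeval lam ((p : ℕ) : Polynomial ℤ) = (p : C) := by
    rw [map_natCast]
  rw [hφp] at h2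
  refine ⟨repE (trC lam g'), ?_⟩
  have h1 : Finsupp.single (List.replicate n (1 : C)) (1 : C) =
      repE (Finsupp.single n (1 : C)) := by
    rw [repE, Finsupp.mapDomain_single]
  rw [h1, mixPow_rep, h2, repE_add, repE_smul, repE_smul]
end

section
/- For every Baxter C-algebra (R,P) of weight λ and every prime p, and for elements a, b ∈ R, one has (a·P(b))^p ≡ a^p · λ^{p-1} · P(b^p) modulo the ideal p·R. -/
noncomputable def baxterW {R : Type*} [CommRing R] (f : R → R) (L b : R) : ℕ → R
  | m =>
    L ^ m * b ^ (m + 1) +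
      ∑ j ∈ (Finset.range m).attach,
        (((m + 1).choose (j.1 + 1) : R)) *
          (L ^ j.1 * b ^ (j.1 + 1) * f (baxterW f L b (m - 1 - j.1)))
termination_by m => m
decreasing_by
  have hj := j.2
  simp only [Finset.mem_range] at hj
  omega

lemma baxterW_def {R : Type*} [CommRing R] (f : R → R) (L b : R) (m : ℕ) :
    baxterW f L b m =
      L ^ m * b ^ (m + 1) +
        ∑ j ∈ Finset.range m,
          (((m + 1).choose (j + 1) : R)) *
            (L ^ j * b ^ (j + 1) * f (baxterW f L b (m - 1 - j))) := by
  conv_lhs => rw [baxterW]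
  rw [Finset.sum_attach (Finset.range m)
    (fun j => (((m + 1).choose (j + 1) : R)) * (L ^ j * b ^ (j + 1) * f (baxterW f L b (m - 1 - j))))]

lemma baxterW_zero {R : Type*} [CommRing R] (f : R → R) (L b : R) :
    baxterW f L b 0 = b := by
  rw [baxterW_def]; simp

section
variable {C R : Type*} [CommRing C] [CommRing R] [Algebra C R]
variable (lam : C) (P : R →ₗ[C] R) (b : R)

lemma baxterW_step
    (hP : ∀ x y : R, P x * P y = P (x * P y) + P (P x * y) + algebraMap C R lam * P (x * y))
    (n : ℕ) :
    baxterW (⇑P) (algebraMap C R lam) b (n + 1) =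
      b * P (baxterW (⇑P) (algebraMap C R lam) b n) +
        P b * baxterW (⇑P) (algebraMap C R lam) b n +
        algebraMap C R lam * b * baxterW (⇑P) (algebraMap C R lam) b n := by
  induction n using Nat.strong_induction_on with
  | _ n IH =>
  set L : R := algebraMap C R lam with hLdef
  set W : ℕ → R := baxterW (⇑P) L b with hWdef
  have hfL : ∀ x : R, P (L * x) = L * P x := by
    intro x
    rw [hLdef, ← Algebra.smul_def, map_smul, Algebra.smul_def]
  have key : ∀ m, m < n → P b * P (W m) = P (W (m + 1)) := by
    intro m hm
    rw [hP b (W m), ← hfL (b * W m), ← map_add, ← map_add, IH m hm]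
    congr 1
    ring
  set T : ℕ → R := fun j => L ^ j * b ^ (j + 1) * P (W (n - j)) with hT
  have hW0 : W 0 = b := baxterW_zero _ _ _
  have hWn : W n = L ^ n * b ^ (n + 1) +
      ∑ j ∈ Finset.range n, (((n + 1).choose (j + 1) : R)) *
        (L ^ j * b ^ (j + 1) * P (W (n - 1 - j))) := baxterW_def _ _ _ n
  -- D part : P b * W n
  have hDn : P b * W n = ∑ j ∈ Finset.range (n + 1), (((n + 1).choose (j + 1) : R)) * T j := by
    rw [Finset.sum_range_succ, hWn, mul_add, Finset.mul_sum]
    have h1 : P b * (L ^ n * b ^ (n + 1)) = (((n + 1).choose (n + 1) : R)) * T n := by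
      simp only [hT, Nat.sub_self, hW0, Nat.choose_self, Nat.cast_one, one_mul]
      ring
    have h2 : ∀ j ∈ Finset.range n,
        P b * ((((n + 1).choose (j + 1) : R)) * (L ^ j * b ^ (j + 1) * P (W (n - 1 - j)))) =
        (((n + 1).choose (j + 1) : R)) * T j := by
      intro j hj
      rw [Finset.mem_range] at hj
      have hidx : n - 1 - j + 1 = n - j := by omega
      have hkey := key (n - 1 - j) (by omega)
      rw [hidx] at hkey
      simp only [hT]
      calc P b * (((n + 1).choose (j + 1) : R) * (L ^ j * b ^ (j + 1) * P (W (n - 1 - j))))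
          = ((n + 1).choose (j + 1) : R) * (L ^ j * b ^ (j + 1) * (P b * P (W (n - 1 - j)))) := by
            ring
        _ = ((n + 1).choose (j + 1) : R) * (L ^ j * b ^ (j + 1) * P (W (n - j))) := by rw [hkey]
    rw [Finset.sum_congr rfl h2, h1]
    exact add_comm _ _
  -- B part : L * b * W n
  have hterm : ∀ j ∈ Finset.range n,
      L * b * ((((n + 1).choose (j + 1) : R)) * (L ^ j * b ^ (j + 1) * P (W (n - 1 - j)))) =
      (((n + 1).choose (j + 1) : R)) * T (j + 1) := by
    intro j hj
    have hidx : n - (j + 1) = n - 1 - j := by omega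
    simp only [hT, hidx]
    ring
  have hBn : L * b * W n = L ^ (n + 1) * b ^ (n + 2) +
      ∑ j ∈ Finset.range n, (((n + 1).choose (j + 1) : R)) * T (j + 1) := by
    rw [hWn, mul_add, Finset.mul_sum, Finset.sum_congr rfl hterm]
    congr 1
    ring
  have h0 : (((n + 1).choose 0 : R)) * T 0 = b * P (W n) := by
    simp only [hT, Nat.choose_zero_right, Nat.cast_one, one_mul, pow_zero, zero_add, pow_one,
      Nat.sub_zero]
  have hABn : b * P (W n) + L * b * W n =
      L ^ (n + 1) * b ^ (n + 2) + ∑ j ∈ Finset.range (n + 1), (((n + 1).choose j : R)) * T j := by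
    have hsum : ∑ j ∈ Finset.range (n + 1), (((n + 1).choose j : R)) * T j
        = (∑ j ∈ Finset.range n, (((n + 1).choose (j + 1) : R)) * T (j + 1))
          + (((n + 1).choose 0 : R)) * T 0 := Finset.sum_range_succ' _ n
    rw [hsum, hBn, h0]
    ring
  -- LHS expansion with Pascal
  have hWsucc : W (n + 1) =
      L ^ (n + 1) * b ^ (n + 2) +
        (∑ j ∈ Finset.range (n + 1), (((n + 1).choose j : R)) * T j +
         ∑ j ∈ Finset.range (n + 1), (((n + 1).choose (j + 1) : R)) * T j) := by
    have h : W (n + 1) = L ^ (n + 1) * b ^ (n + 1 + 1) +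
        ∑ j ∈ Finset.range (n + 1), (((n + 1 + 1).choose (j + 1) : R)) *
          (L ^ j * b ^ (j + 1) * P (W (n + 1 - 1 - j))) := baxterW_def (⇑P) L b (n + 1)
    rw [h, ← Finset.sum_add_distrib]
    congr 1
    apply Finset.sum_congr rfl
    intro j hj
    have hidx : n + 1 - 1 - j = n - j := by omega
    have hc : (((n + 1 + 1).choose (j + 1) : R)) = ((n + 1).choose j : R) + ((n + 1).choose (j + 1) : R) := by
      norm_cast
    rw [hidx, hc]
    simp only [hT]
    ring
  rw [hWsucc]
  linear_combination -hABn - hDn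

lemma baxterW_mul
    (hP : ∀ x y : R, P x * P y = P (x * P y) + P (P x * y) + algebraMap C R lam * P (x * y))
    (n : ℕ) :
    P b * P (baxterW (⇑P) (algebraMap C R lam) b n) =
      P (baxterW (⇑P) (algebraMap C R lam) b (n + 1)) := by
  have hfL : ∀ x : R, P (algebraMap C R lam * x) = algebraMap C R lam * P x := by
    intro x
    rw [← Algebra.smul_def, map_smul, Algebra.smul_def]
  rw [hP b _, ← hfL (b * baxterW (⇑P) (algebraMap C R lam) b n), ← map_add, ← map_add,
    baxterW_step lam P b hP n]
  congr 1
  ring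

lemma baxterW_pow
    (hP : ∀ x y : R, P x * P y = P (x * P y) + P (P x * y) + algebraMap C R lam * P (x * y)) :
    ∀ n : ℕ, (P b) ^ (n + 1) = P (baxterW (⇑P) (algebraMap C R lam) b n)
  | 0 => by rw [pow_one, baxterW_zero]
  | (n + 1) => by
    rw [pow_succ, baxterW_pow hP n, mul_comm, baxterW_mul lam P b hP n]

end



/-- In a Baxter `C`-algebra `(R, P)` of weight `λ` and a prime `p`, for `a, b ∈ R`,
`(a·P(b))^p ≡ a^p λ^{p-1} P(b^p) (mod p)`. -/
theorem baxter_fermat_mul_P {C R : Type*} [CommRing C] [CommRing R] [Algebra C R]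
    (lam : C) (P : R →ₗ[C] R)
    (hP : ∀ x y : R, P x * P y = P (x * P y) + P (P x * y) + algebraMap C R lam * P (x * y))
    (p : ℕ) (hp : p.Prime) (a b : R) :
    (a * P b) ^ p - a ^ p * (algebraMap C R lam) ^ (p - 1) * P (b ^ p) ∈
      Ideal.span {(p : R)} := by
  obtain ⟨m, rfl⟩ : ∃ m, p = m + 1 := ⟨p - 1, (Nat.succ_pred_eq_of_pos hp.pos).symm⟩
  set L : R := algebraMap C R lam with hLdef
  have hfL : ∀ (k : ℕ) (x : R), P (L ^ k * x) = L ^ k * P x := by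
    intro k x
    rw [hLdef, ← map_pow, ← Algebra.smul_def, map_smul, Algebra.smul_def, map_pow]
  have hpow := baxterW_pow lam P b hP m
  have hWm : baxterW (⇑P) L b m = L ^ m * b ^ (m + 1) +
      ∑ j ∈ Finset.range m, (((m + 1).choose (j + 1) : R)) *
        (L ^ j * b ^ (j + 1) * P (baxterW (⇑P) L b (m - 1 - j))) := baxterW_def _ _ _ m
  have hmain : (P b) ^ (m + 1) = L ^ m * P (b ^ (m + 1)) +
      ∑ j ∈ Finset.range m, (((m + 1).choose (j + 1) : R)) *
        P (L ^ j * b ^ (j + 1) * P (baxterW (⇑P) L b (m - 1 - j))) := by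
    rw [hpow, hWm, map_add, map_sum, hfL m]
    congr 1
    apply Finset.sum_congr rfl
    intro j hj
    rw [show (((m + 1).choose (j + 1) : R)) * (L ^ j * b ^ (j + 1) *
        P (baxterW (⇑P) L b (m - 1 - j))) = ((m + 1).choose (j + 1)) •
        (L ^ j * b ^ (j + 1) * P (baxterW (⇑P) L b (m - 1 - j))) from by
      rw [nsmul_eq_mul], map_nsmul, nsmul_eq_mul]
  have hsum : ∑ j ∈ Finset.range m, (((m + 1).choose (j + 1) : R)) *
      P (L ^ j * b ^ (j + 1) * P (baxterW (⇑P) L b (m - 1 - j))) ∈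
      Ideal.span {((m + 1 : ℕ) : R)} := by
    apply Ideal.sum_mem
    intro j hj
    rw [Finset.mem_range] at hj
    obtain ⟨t, ht⟩ : (m + 1) ∣ (m + 1).choose (j + 1) :=
      hp.dvd_choose_self (Nat.succ_ne_zero j) (by omega)
    rw [Ideal.mem_span_singleton]
    exact ⟨(t : R) * P (L ^ j * b ^ (j + 1) * P (baxterW (⇑P) L b (m - 1 - j))), by
      rw [ht]; push_cast; ring⟩
  have hgoal : (a * P b) ^ (m + 1) - a ^ (m + 1) * L ^ (m + 1 - 1) * P (b ^ (m + 1)) =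
      a ^ (m + 1) * (∑ j ∈ Finset.range m, (((m + 1).choose (j + 1) : R)) *
        P (L ^ j * b ^ (j + 1) * P (baxterW (⇑P) L b (m - 1 - j)))) := by
    rw [mul_pow, hmain, Nat.add_sub_cancel]
    ring
  rw [hgoal]
  exact Ideal.mul_mem_left _ _ hsum
end
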